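/- arXiv:1008.2673 — 10 statements merged into one kernel-verified Lean document; each statement's English description precedes it below -/
import Mathlib

section
/- Let M be a normal matrix in ℂ^{N×N} (i.e. M Mᴴ = Mᴴ M). Then M is dissipative if and only if the spectral (operator) norm of the matrix exponential satisfies ‖exp(M)‖ ≤ 1. -/
open Matrix Set Complex

noncomputable section

/-- The Hermitian inner product `⟨x, y⟩ = ∑ j, x j * conj (y j)` on `ℂ^n`. -/
def herm {n : Type*} [Fintype n] (x y : n → ℂ) : ℂ :=
  ∑ j, x j * (starRingEnd ℂ) (y j)

/-- The squared Euclidean norm on `ℂ^n`. -/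
def enormSq {n : Type*} [Fintype n] (x : n → ℂ) : ℝ :=
  ∑ j, ‖x j‖ ^ 2

/-- A matrix `M` is dissipative if `Re (wᴴ M w) ≤ 0` for all vectors `w`. -/
def Dissipative {n : Type*} [Fintype n] (M : Matrix n n ℂ) : Prop :=
  ∀ w : n → ℂ, (herm (M.mulVec w) w).re ≤ 0

/-- The operator (spectral) norm of `A` is at most `1`:
`|A x| ≤ |x|` for every `x` (in the Euclidean norm). -/
def OpNormLeOne {n : Type*} [Fintype n] (A : Matrix n n ℂ) : Prop :=
  ∀ x : n → ℂ, enormSq (A.mulVec x) ≤ enormSq x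

/-! For a normal operator `T`, `(exp T)⋆ * exp T = exp (T⋆ + T)`, so the C⋆-identity gives
`‖exp T‖² = ‖exp (T⋆ + T)‖`. For the self-adjoint `H = T⋆ + T`, the continuous functional calculus
turns `‖exp H‖ ≤ 1` into `exp H ≤ 1`, i.e. `Real.exp ≤ 1` on the spectrum of `H`, i.e. `H ≤ 0`;
and `T⋆ + T ≤ 0` is exactly dissipativity of `T`. A matrix is transported to an operator on
`EuclideanSpace ℂ n` by `Matrix.toEuclideanCLM`. -/

section CStarAlgebra

variable {A : Type*} [CStarAlgebra A]

lemma norm_exp_sq_eq_norm_exp_star_add_self {a : A} (ha : Commute (star a) a) :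
    ‖NormedSpace.exp a‖ ^ 2 = ‖NormedSpace.exp (star a + a)‖ := by
  let +nondep : NormedAlgebra ℚ A := .restrictScalars ℚ ℂ A
  rw [NormedSpace.exp_add_of_commute ha, ← NormedSpace.star_exp, CStarRing.norm_star_mul_self, sq]

variable [PartialOrder A] [StarOrderedRing A]

lemma IsSelfAdjoint.norm_exp_le_one_iff {a : A} (ha : IsSelfAdjoint a) :
    ‖NormedSpace.exp a‖ ≤ 1 ↔ a ≤ 0 := by
  have hspec : a ≤ 0 ↔ ∀ x ∈ spectrum ℝ a, x ≤ 0 := by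
    simpa using le_algebraMap_iff_spectrum_le (r := (0 : ℝ)) (a := a)
  rw [CStarAlgebra.norm_le_one_iff_of_nonneg _ ha.exp_nonneg,
    ← CFC.real_exp_eq_normedSpace_exp ha, cfc_le_one_iff Real.exp a, hspec]
  simp only [Real.exp_le_one_iff]

end CStarAlgebra

section InnerProductSpace

variable {E : Type*} [NormedAddCommGroup E] [InnerProductSpace ℂ E] [CompleteSpace E]

lemma ContinuousLinearMap.star_add_self_nonpos_iff (T : E →L[ℂ] E) :
    star T + T ≤ 0 ↔ ∀ x, (inner ℂ x (T x)).re ≤ 0 := by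
  have hsa : IsSelfAdjoint (-(star T + T)) := (IsSelfAdjoint.star_add_self T).neg
  rw [le_def, zero_sub, isPositive_def, and_iff_right hsa.isSymmetric]
  refine forall_congr' fun x => ?_
  rw [reApplyInnerSelf_apply, _root_.neg_apply, _root_.add_apply, inner_neg_left, inner_add_left,
    star_eq_adjoint, adjoint_inner_left, map_neg, map_add, inner_re_symm (T x)]
  simp only [RCLike.re_to_complex]
  constructor <;> intro h <;> linarith

end InnerProductSpace

section Matrix

open WithLp

variable {n : Type*} [Fintype n]

lemma enormSq_eq_norm_sq (x : n → ℂ) : enormSq x = ‖(toLp 2 x : EuclideanSpace ℂ n)‖ ^ 2 := by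
  simp [enormSq, EuclideanSpace.norm_sq_eq]

variable [DecidableEq n]

lemma herm_mulVec_eq_inner (M : Matrix n n ℂ) (w : n → ℂ) :
    herm (M *ᵥ w) w = inner ℂ (toLp 2 w) (toEuclideanCLM (𝕜 := ℂ) M (toLp 2 w)) := by
  simp [herm, PiLp.inner_apply]

lemma dissipative_iff_re_inner_nonpos (M : Matrix n n ℂ) :
    Dissipative M ↔ ∀ x, (inner ℂ x (toEuclideanCLM (𝕜 := ℂ) M x)).re ≤ 0 := by
  simp only [Dissipative, herm_mulVec_eq_inner, (toLp_surjective 2).forall]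

lemma opNormLeOne_iff_norm_toEuclideanCLM_le_one (A : Matrix n n ℂ) :
    OpNormLeOne A ↔ ‖toEuclideanCLM (𝕜 := ℂ) A‖ ≤ 1 := by
  simp only [OpNormLeOne, ContinuousLinearMap.opNorm_le_iff zero_le_one, one_mul,
    (toLp_surjective 2).forall, enormSq_eq_norm_sq, toEuclideanCLM_toLp]
  exact forall_congr' fun x => pow_le_pow_iff_left₀ (norm_nonneg _) (norm_nonneg _) two_ne_zero

lemma toEuclideanCLM_exp (M : Matrix n n ℂ) :
    toEuclideanCLM (𝕜 := ℂ) (NormedSpace.exp M) = NormedSpace.exp (toEuclideanCLM (𝕜 := ℂ) M) := by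
  -- `map_exp` needs a normed algebra as its source; the ℓ∞ operator norm induces the product
  -- topology definitionally
  let : NormedRing (Matrix n n ℂ) := Matrix.linftyOpNormedRing
  let : NormedAlgebra ℂ (Matrix n n ℂ) := Matrix.linftyOpNormedAlgebra
  let : NormedAlgebra ℚ (Matrix n n ℂ) := Matrix.linftyOpNormedAlgebra
  exact NormedSpace.map_exp toEuclideanCLM (LinearMap.continuous_of_finiteDimensional
    (toEuclideanCLM (n := n) (𝕜 := ℂ)).toAlgEquiv.toLinearMap) M

end Matrix

/-- A normal matrix `M` is dissipative if and only if `‖exp M‖ ≤ 1`. -/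
theorem stmt0 {N : ℕ} (M : Matrix (Fin N) (Fin N) ℂ)
    (hnormal : M * Mᴴ = Mᴴ * M) :
    Dissipative M ↔ OpNormLeOne (NormedSpace.exp M) := by
  set T := toEuclideanCLM (n := Fin N) (𝕜 := ℂ) M
  have hT : Commute (star T) T := by
    change star T * T = T * star T
    rw [← map_star, ← map_mul, ← map_mul, star_eq_conjTranspose, hnormal]
  rw [dissipative_iff_re_inner_nonpos, opNormLeOne_iff_norm_toEuclideanCLM_le_one,
    toEuclideanCLM_exp, ← T.star_add_self_nonpos_iff,
    ← (IsSelfAdjoint.star_add_self T).norm_exp_le_one_iff,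
    ← norm_exp_sq_eq_norm_exp_star_add_self hT, sq_le_one_iff₀ (norm_nonneg _)]
end
end

section
/- Let A ∈ ℂ^{N×N} with spectral norm ‖A‖ ≤ 1, and let λ ∈ ℂ with |λ| = 1 be an eigenvalue of A. Then every eigenvector v of A for λ is also an eigenvector of Aᴴ for the eigenvalue conj(λ); that is, if A v = λ v then Aᴴ v = conj(λ) v. In particular, ker(A − λI)² = ker(A − λI), so λ is a semisimple eigenvalue of A. -/
open Matrix Set Complex

noncomputable section

/-!
Let `‖T‖ ≤ 1`, `|λ| = 1` and `T v = λ v`. Then `⟪T† v, conj λ • v⟫ = λ ⟪v, T v⟫ = ‖v‖²`, while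
`‖T† v‖ ≤ ‖T‖ ‖v‖ ≤ ‖v‖`; expanding `‖T† v - conj λ • v‖²` therefore gives a number `≤ 0`.
Semisimplicity follows: if `(T - λ)² v = 0`, then `u := (T - λ) v` is an eigenvector of `T`, hence
of `T†`, so `‖u‖² = ⟪u, (T - λ) v⟫ = ⟪(T† - conj λ) u, v⟫ = 0`.
-/

open scoped InnerProductSpace

namespace ContinuousLinearMap

variable {𝕜 E : Type*} [RCLike 𝕜] [NormedAddCommGroup E] [InnerProductSpace 𝕜 E]
  [CompleteSpace E]

theorem adjoint_apply_eq_conj_smul_of_apply_eq_smul {T : E →L[𝕜] E} (hT : ‖T‖ ≤ 1) {c : 𝕜}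
    (hc : ‖c‖ = 1) {v : E} (hv : T v = c • v) : adjoint T v = starRingEnd 𝕜 c • v := by
  have h_norm : ‖adjoint T v‖ ≤ ‖v‖ := by
    simpa using (adjoint T).le_of_opNorm_le (c := 1) (by rwa [adjoint.norm_map]) v
  have h_inner : ⟪adjoint T v, starRingEnd 𝕜 c • v⟫_𝕜 = (‖v‖ ^ 2 : ℝ) := by
    rw [inner_smul_right, adjoint_inner_left, hv, inner_smul_right, ← mul_assoc, RCLike.conj_mul,
      hc, inner_self_eq_norm_sq_to_K]
    simp
  have h_sq : ‖adjoint T v - starRingEnd 𝕜 c • v‖ ^ 2 ≤ 0 := by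
    rw [@norm_sub_sq 𝕜, h_inner, RCLike.ofReal_re, norm_smul, RCLike.norm_conj, hc, one_mul]
    nlinarith [norm_nonneg (adjoint T v)]
  exact sub_eq_zero.mp (norm_eq_zero.mp (pow_eq_zero_iff two_ne_zero |>.mp
    (le_antisymm h_sq (sq_nonneg _))))

theorem apply_sub_smul_one_eq_zero_of_sq {T : E →L[𝕜] E} {c : 𝕜}
    (h : ∀ u, T u = c • u → adjoint T u = starRingEnd 𝕜 c • u) {v : E}
    (hv : (T - c • 1) ((T - c • 1) v) = 0) : (T - c • 1) v = 0 := by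
  set u := (T - c • 1) v
  have hu : T u = c • u := by
    simpa [sub_eq_zero] using hv
  have h_inner : ⟪u, u⟫_𝕜 = 0 := calc
    ⟪u, u⟫_𝕜 = ⟪u, T v - c • v⟫_𝕜 := rfl
    _ = ⟪u, T v⟫_𝕜 - c * ⟪u, v⟫_𝕜 := by rw [inner_sub_right, inner_smul_right]
    _ = ⟪starRingEnd 𝕜 c • u, v⟫_𝕜 - c * ⟪u, v⟫_𝕜 := by rw [← adjoint_inner_left, h u hu]
    _ = 0 := by rw [inner_smul_left, RCLike.conj_conj, sub_self]
  exact inner_self_eq_zero.mp h_inner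

end ContinuousLinearMap

open ContinuousLinearMap WithLp

theorem enormSq_eq_norm_toLp_sq {n : Type*} [Fintype n] (x : n → ℂ) :
    enormSq x = ‖toLp 2 x‖ ^ 2 := by
  simp [enormSq, EuclideanSpace.norm_sq_eq]

theorem OpNormLeOne.norm_toEuclideanCLM_le_one {n : Type*} [Fintype n] [DecidableEq n]
    {A : Matrix n n ℂ} (hA : OpNormLeOne A) : ‖toEuclideanCLM (𝕜 := ℂ) A‖ ≤ 1 := by
  refine opNorm_le_bound _ zero_le_one fun x => ?_
  rw [one_mul, ← pow_le_pow_iff_left₀ (norm_nonneg _) (norm_nonneg _) two_ne_zero,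
    ← toLp_ofLp 2 x, Matrix.toEuclideanCLM_toLp, ← enormSq_eq_norm_toLp_sq,
    ← enormSq_eq_norm_toLp_sq]
  exact hA (ofLp x)

theorem Matrix.toEuclideanCLM_conjTranspose {𝕜 n : Type*} [RCLike 𝕜] [Fintype n]
    [DecidableEq n] (A : Matrix n n 𝕜) :
    toEuclideanCLM (𝕜 := 𝕜) Aᴴ = adjoint (toEuclideanCLM (𝕜 := 𝕜) A) := by
  rw [← star_eq_conjTranspose, map_star, star_eq_adjoint]

theorem stmt1_general {N : ℕ} (A : Matrix (Fin N) (Fin N) ℂ) (hA : OpNormLeOne A)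
    (lam : ℂ) (hlam : ‖lam‖ = 1) :
    (∀ v : Fin N → ℂ, A.mulVec v = lam • v →
      Aᴴ.mulVec v = (starRingEnd ℂ lam) • v) ∧
    (∀ v : Fin N → ℂ,
      (A - lam • (1 : Matrix (Fin N) (Fin N) ℂ)).mulVec
          ((A - lam • (1 : Matrix (Fin N) (Fin N) ℂ)).mulVec v) = 0 →
        (A - lam • (1 : Matrix (Fin N) (Fin N) ℂ)).mulVec v = 0) := by
  set T := toEuclideanCLM (𝕜 := ℂ) A
  have h_eig : ∀ u, T u = lam • u → adjoint T u = starRingEnd ℂ lam • u :=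
    fun u => adjoint_apply_eq_conj_smul_of_apply_eq_smul hA.norm_toEuclideanCLM_le_one hlam
  have h_sub : ∀ w, toLp 2 ((A - lam • 1) *ᵥ w) = (T - lam • 1) (toLp 2 w) := fun w => by
    rw [← Matrix.toEuclideanCLM_toLp, map_sub, map_smul, map_one]
  refine ⟨fun v hv => ?_, fun v hv => ?_⟩
  · have := congrArg ofLp (h_eig (toLp 2 v) (congrArg (toLp 2) hv))
    rwa [← Matrix.toEuclideanCLM_conjTranspose] at this
  · rw [← toLp_eq_zero (p := 2), h_sub, h_sub] at hv
    rw [← toLp_eq_zero (p := 2), h_sub]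
    exact apply_sub_smul_one_eq_zero_of_sq h_eig hv

/-- If `‖A‖ ≤ 1` and `λ` is an eigenvalue of `A` of modulus one, then every
eigenvector of `A` for `λ` is an eigenvector of `Aᴴ` for `conj λ`; in particular
`ker (A - λI)² = ker (A - λI)`, i.e. `λ` is a semisimple eigenvalue. -/
theorem stmt1 {N : ℕ} (A : Matrix (Fin N) (Fin N) ℂ) (hA : OpNormLeOne A)
    (lam : ℂ) (hlam : ‖lam‖ = 1)
    (heig : ∃ v : Fin N → ℂ, v ≠ 0 ∧ A.mulVec v = lam • v) :
    (∀ v : Fin N → ℂ, A.mulVec v = lam • v →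
      Aᴴ.mulVec v = (starRingEnd ℂ lam) • v) ∧
    (∀ v : Fin N → ℂ,
      (A - lam • (1 : Matrix (Fin N) (Fin N) ℂ)).mulVec
          ((A - lam • (1 : Matrix (Fin N) (Fin N) ℂ)).mulVec v) = 0 →
        (A - lam • (1 : Matrix (Fin N) (Fin N) ℂ)).mulVec v = 0) :=
  stmt1_general A hA lam hlam
end
end

section
/- Let N ≥ 1 and 1 ≤ u ≤ N. Let Λ be a u×u diagonal matrix whose diagonal entries all have modulus 1, let A₁ be an (N−u)×(N−u) matrix with ‖A₁‖ ≤ 1 and spectral radius ρ(A₁) < 1, and let C ∈ ℂ^N. Write z = (z′, z″) ∈ ℂ^u × ℂ^{N−u} and define φ(z) = (Λ z′, A₁ z″)/(⟨z, C⟩ + 1). If ⟨z, C⟩ + 1 ≠ 0 for every z ∈ B_N and φ maps B_N into B_N, then C = 0 (so φ(z′,z″) = (Λz′, A₁z″) is linear). -/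
/-!
Since `Λ` is unitary, `φ(z) ∈ B_N` forces `‖z′‖ < |⟨z, C⟩ + 1|` on the whole ball. If `C′ ≠ 0`,
the point `z = (-(a/‖C′‖) C′, 0)` with `a = 1/(1 + ‖C′‖)` lies in the ball and has
`‖z′‖ = a = ⟨z, C⟩ + 1`. If `C′ = 0` but `C″ ≠ 0`, take `z = (a e₁, -a C″)` with
`a = 1/(1 + ‖C″‖²)`: again `‖z′‖ = a = ⟨z, C⟩ + 1`, and `‖z‖² = a < 1`.
-/

open Matrix Set Complex

noncomputable section

section

variable {m n : Type*} [Fintype m] [Fintype n]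

lemma herm_zero_left (y : n → ℂ) : herm 0 y = 0 := by
  simp [herm]

lemma herm_zero_right (x : n → ℂ) : herm x 0 = 0 := by
  simp [herm]

lemma herm_ofReal_smul_self (c : ℝ) (x : n → ℂ) :
    herm ((c : ℂ) • x) x = (c * enormSq x : ℝ) := by
  simp only [herm, enormSq, Pi.smul_apply, smul_eq_mul, mul_assoc, Complex.mul_conj,
    ← Finset.mul_sum, Complex.normSq_eq_norm_sq]
  push_cast
  rfl

lemma enormSq_zero : enormSq (0 : n → ℂ) = 0 := by
  simp [enormSq]

lemma enormSq_nonneg (x : n → ℂ) : 0 ≤ enormSq x :=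
  Finset.sum_nonneg fun _ _ => by positivity

lemma enormSq_pos {x : n → ℂ} (hx : x ≠ 0) : 0 < enormSq x := by
  obtain ⟨j, hj⟩ := Function.ne_iff.mp hx
  exact Finset.sum_pos' (fun _ _ => by positivity) ⟨j, Finset.mem_univ j, by positivity⟩

lemma enormSq_smul (c : ℂ) (x : n → ℂ) : enormSq (c • x) = ‖c‖ ^ 2 * enormSq x := by
  simp [enormSq, mul_pow, Finset.mul_sum]

lemma enormSq_ofReal_smul (c : ℝ) (x : n → ℂ) : enormSq ((c : ℂ) • x) = c ^ 2 * enormSq x := by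
  rw [enormSq_smul, Complex.norm_real, Real.norm_eq_abs, sq_abs]

lemma enormSq_single [DecidableEq n] (i : n) (c : ℂ) : enormSq (Pi.single i c) = ‖c‖ ^ 2 := by
  simp only [enormSq, Pi.single_apply, apply_ite (fun x : ℂ => ‖x‖ ^ 2), norm_zero]
  simp

lemma enormSq_diagonal_mulVec [DecidableEq n] {d : n → ℂ} (hd : ∀ i, ‖d i‖ = 1) (x : n → ℂ) :
    enormSq ((diagonal d).mulVec x) = enormSq x := by
  simp [enormSq, mulVec_diagonal, hd]

lemma enormSq_lt_norm_sq_of_smul_inv {w : ℂ} (hw : w ≠ 0) {x : m → ℂ} {y : n → ℂ}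
    (h : enormSq (w⁻¹ • x) + enormSq (w⁻¹ • y) < 1) : enormSq x < ‖w‖ ^ 2 := by
  have hw2 : 0 < ‖w‖ ^ 2 := by positivity
  rw [enormSq_smul, enormSq_smul, norm_inv, inv_pow, ← mul_add, inv_mul_lt_iff₀ hw2,
    mul_one] at h
  linarith [enormSq_nonneg y]

lemma eq_zero_of_forall_enormSq_lt_norm_herm_add_one_sq {C : m → ℂ}
    (h : ∀ x : m → ℂ, enormSq x < 1 → enormSq x < ‖herm x C + 1‖ ^ 2) : C = 0 := by
  by_contra hC
  have hs : 0 < enormSq C := enormSq_pos hC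
  obtain ⟨t, ht, hts⟩ : ∃ t : ℝ, 0 < t ∧ t ^ 2 = enormSq C :=
    ⟨_, Real.sqrt_pos.mpr hs, Real.sq_sqrt hs.le⟩
  obtain ⟨a, ha, hat⟩ : ∃ a : ℝ, 0 < a ∧ a * (1 + t) = 1 :=
    ⟨_, by positivity, inv_mul_cancel₀ (by positivity)⟩
  have hx : enormSq (((-(a / t) : ℝ) : ℂ) • C) = a ^ 2 := by
    rw [enormSq_ofReal_smul, ← hts]
    field_simp
  have hD : herm (((-(a / t) : ℝ) : ℂ) • C) C + 1 = (a : ℂ) := by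
    rw [herm_ofReal_smul_self, ← hts, ← Complex.ofReal_one, ← Complex.ofReal_add]
    congr 1
    field_simp
    linear_combination -hat
  have := h _ (by rw [hx]; nlinarith)
  rw [hx, hD, Complex.norm_real, Real.norm_eq_abs, sq_abs] at this
  exact lt_irrefl _ this

lemma eq_zero_of_forall_enormSq_lt_norm_herm_snd_add_one_sq [Nonempty m] {C : n → ℂ}
    (h : ∀ (x : m → ℂ) (y : n → ℂ), enormSq x + enormSq y < 1 →
      enormSq x < ‖herm y C + 1‖ ^ 2) : C = 0 := by
  classical
  by_contra hC
  have hs : 0 < enormSq C := enormSq_pos hC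
  obtain ⟨a, ha, has⟩ : ∃ a : ℝ, 0 < a ∧ a * (1 + enormSq C) = 1 :=
    ⟨_, by positivity, inv_mul_cancel₀ (by positivity)⟩
  have hx : enormSq (Pi.single (Classical.arbitrary m) (a : ℂ)) = a ^ 2 := by
    rw [enormSq_single, Complex.norm_real, Real.norm_eq_abs, sq_abs]
  have hy : enormSq (((-a : ℝ) : ℂ) • C) = a ^ 2 * enormSq C := by
    rw [enormSq_ofReal_smul, neg_sq]
  have hD : herm (((-a : ℝ) : ℂ) • C) C + 1 = (a : ℂ) := by
    rw [herm_ofReal_smul_self, ← Complex.ofReal_one, ← Complex.ofReal_add]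
    congr 1
    linear_combination -has
  have := h _ _ (by rw [hx, hy]; nlinarith)
  rw [hx, hD, Complex.norm_real, Real.norm_eq_abs, sq_abs] at this
  exact lt_irrefl _ this

end

theorem stmt2_general {N u : ℕ} (hu1 : 1 ≤ u)
    (d : Fin u → ℂ) (hd : ∀ i, ‖d i‖ = 1)
    (A₁ : Matrix (Fin (N - u)) (Fin (N - u)) ℂ)
    (C₁ : Fin u → ℂ) (C₂ : Fin (N - u) → ℂ)
    (φ : (Fin u → ℂ) × (Fin (N - u) → ℂ) → (Fin u → ℂ) × (Fin (N - u) → ℂ))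
    (hφ : ∀ z, φ z = (herm z.1 C₁ + herm z.2 C₂ + 1)⁻¹ •
      ((Matrix.diagonal d).mulVec z.1, A₁.mulVec z.2))
    (hden : ∀ z : (Fin u → ℂ) × (Fin (N - u) → ℂ),
      enormSq z.1 + enormSq z.2 < 1 → herm z.1 C₁ + herm z.2 C₂ + 1 ≠ 0)
    (hmaps : ∀ z : (Fin u → ℂ) × (Fin (N - u) → ℂ),
      enormSq z.1 + enormSq z.2 < 1 → enormSq (φ z).1 + enormSq (φ z).2 < 1) :
    C₁ = 0 ∧ C₂ = 0 := by
  have key : ∀ z : (Fin u → ℂ) × (Fin (N - u) → ℂ), enormSq z.1 + enormSq z.2 < 1 →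
      enormSq z.1 < ‖herm z.1 C₁ + herm z.2 C₂ + 1‖ ^ 2 := by
    intro z hz
    have h := hmaps z hz
    rw [hφ, Prod.smul_fst, Prod.smul_snd] at h
    simpa only [enormSq_diagonal_mulVec hd] using enormSq_lt_norm_sq_of_smul_inv (hden z hz) h
  have hC₁ : C₁ = 0 := eq_zero_of_forall_enormSq_lt_norm_herm_add_one_sq fun x hx => by
    simpa [herm_zero_left, enormSq_zero] using key (x, 0) (by simpa [enormSq_zero] using hx)
  have : Nonempty (Fin u) := ⟨⟨0, hu1⟩⟩
  exact ⟨hC₁, eq_zero_of_forall_enormSq_lt_norm_herm_snd_add_one_sq fun x y hxy => by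
    simpa [hC₁, herm_zero_right] using key (x, y) hxy⟩

/-- If `Λ` is a diagonal unitary matrix of order `u`, `A₁` has `‖A₁‖ ≤ 1` and
spectral radius `< 1`, and `φ(z) = (Λ z', A₁ z'')/(⟨z, C⟩ + 1)` is a well-defined
self-map of the unit ball `B_N` (`z = (z', z'') ∈ ℂ^u × ℂ^{N-u}`), then `C = 0`. -/
theorem stmt2 {N u : ℕ} (hN : 1 ≤ N) (hu1 : 1 ≤ u) (huN : u ≤ N)
    (d : Fin u → ℂ) (hd : ∀ i, ‖d i‖ = 1)
    (A₁ : Matrix (Fin (N - u)) (Fin (N - u)) ℂ)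
    (hA₁norm : OpNormLeOne A₁)
    (hA₁spec : ∀ μ ∈ spectrum ℂ A₁, ‖μ‖ < 1)
    (C₁ : Fin u → ℂ) (C₂ : Fin (N - u) → ℂ)
    (φ : (Fin u → ℂ) × (Fin (N - u) → ℂ) → (Fin u → ℂ) × (Fin (N - u) → ℂ))
    (hφ : ∀ z, φ z = (herm z.1 C₁ + herm z.2 C₂ + 1)⁻¹ •
      ((Matrix.diagonal d).mulVec z.1, A₁.mulVec z.2))
    (hden : ∀ z : (Fin u → ℂ) × (Fin (N - u) → ℂ),
      enormSq z.1 + enormSq z.2 < 1 → herm z.1 C₁ + herm z.2 C₂ + 1 ≠ 0)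
    (hmaps : ∀ z : (Fin u → ℂ) × (Fin (N - u) → ℂ),
      enormSq z.1 + enormSq z.2 < 1 → enormSq (φ z).1 + enormSq (φ z).2 < 1) :
    C₁ = 0 ∧ C₂ = 0 :=
  stmt2_general hu1 d hd A₁ C₁ C₂ φ hφ hden hmaps
end
end

section
/- Let N ≥ 2, λ > 0 a real number, b ∈ ℂ, a, c ∈ ℂ^{N−1}, and M ∈ ℂ^{(N−1)×(N−1)}. Define φ(z, w) = (λ z + 2i⟨w, a⟩ + b, M w + c) for (z, w) ∈ ℂ × ℂ^{N−1}, and set Q = λI − Mᴴ M. Then φ maps the Siegel half-plane ℍ^N into itself if and only if: (P1) Q is a Hermitian positive semi-definite matrix; (P3) there exists x ∈ ℂ^{N−1} with Q x = Mᴴ c − a; and (P2) Im(b) − |c|² ≥ xᴴ(Mᴴ c − a) for such an x (note that for x with Qx = Mᴴc − a the number xᴴ(Mᴴ c − a) = xᴴ Q x is a nonnegative real independent of the choice of x). -/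
/-!
Write `Q = λI - MᴴM`, `d = Mᴴc - a` and `s = Im b - |c|²`. For `p = (z, w)`,
`Im φ(p)₁ - |φ(p)₂|² = λ (Im z - |w|²) + F w` with `F w = Re (wᴴQw) - 2 Re ⟨w, d⟩ + s`, and
`Im z - |w|²` ranges over all of `(0, ∞)` on `ℍ^N`, so `φ` preserves `ℍ^N` iff `F ≥ 0`.
Restricting `F` to real lines `t ↦ F (t u)` shows that `F ≥ 0` forces `Q ≥ 0` and `d ⊥ ker Q`,
i.e. `d ∈ range Q` since `Q` is Hermitian. Completing the square,
`F w = Re ((w - x)ᴴ Q (w - x)) + s - Re (xᴴ d)` whenever `Q x = d`, so then `F ≥ 0` iff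
`Re (xᴴ d) ≤ s`.
-/

open Matrix Set Complex
open scoped ComplexOrder

noncomputable section

theorem nonneg_and_eq_zero_of_forall_quadratic_nonneg {q p s : ℝ}
    (h : ∀ t : ℝ, 0 ≤ q * (t * t) + p * t + s) : 0 ≤ q ∧ (q = 0 → p = 0) := by
  have hdiscrim := discrim_le_zero h
  rw [discrim] at hdiscrim
  have h0 := h 0
  have h1 := h 1
  have h2 := h (-1)
  refine ⟨by nlinarith, fun hq => ?_⟩
  subst hq
  nlinarith

section QuadraticForm

variable {𝕜 n : Type*} [RCLike 𝕜] [Fintype n]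

open RCLike

theorem re_star_dotProduct_comm (x y : n → 𝕜) : re (star x ⬝ᵥ y) = re (star y ⬝ᵥ x) := by
  rw [star_dotProduct, RCLike.star_def, RCLike.conj_re]

theorem re_dotProduct_ofReal_smul (d u : n → 𝕜) (t : ℝ) :
    re (d ⬝ᵥ (t : 𝕜) • u) = re (d ⬝ᵥ u) * t := by
  rw [dotProduct_smul, smul_eq_mul, RCLike.re_ofReal_mul, mul_comm]

theorem re_star_dotProduct_mulVec_ofReal_smul (Q : Matrix n n 𝕜) (u : n → 𝕜) (t : ℝ) :
    re (star ((t : 𝕜) • u) ⬝ᵥ Q *ᵥ ((t : 𝕜) • u)) = re (star u ⬝ᵥ Q *ᵥ u) * (t * t) := by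
  simp only [star_smul, mulVec_smul, smul_dotProduct, dotProduct_smul, smul_eq_mul,
    RCLike.star_def, RCLike.conj_ofReal, ← mul_assoc, ← RCLike.ofReal_mul,
    RCLike.re_ofReal_mul, mul_comm]

theorem Matrix.IsHermitian.re_sub_dotProduct_mulVec_sub {Q : Matrix n n 𝕜}
    (hQ : Q.IsHermitian) {x d : n → 𝕜} (hx : Q *ᵥ x = d) (w : n → 𝕜) :
    re (star (w - x) ⬝ᵥ Q *ᵥ (w - x)) =
      re (star w ⬝ᵥ Q *ᵥ w) - 2 * re (star d ⬝ᵥ w) + re (star x ⬝ᵥ d) := by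
  have hxw : star x ⬝ᵥ Q *ᵥ w = star d ⬝ᵥ w := by
    rw [dotProduct_mulVec, ← hQ.eq, ← star_mulVec, hx]
  simp only [star_sub, mulVec_sub, sub_dotProduct, dotProduct_sub, map_sub, hx, hxw,
    re_star_dotProduct_comm w d]
  ring

theorem Matrix.IsHermitian.exists_mulVec_eq [DecidableEq n] {Q : Matrix n n 𝕜}
    (hQ : Q.IsHermitian) {d : n → 𝕜} (hd : ∀ v, Q *ᵥ v = 0 → star v ⬝ᵥ d = 0) :
    ∃ x, Q *ᵥ x = d := by
  have hd_range : WithLp.toLp 2 d ∈ LinearMap.range Q.toEuclideanLin := by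
    rw [← Submodule.orthogonal_orthogonal (LinearMap.range _),
      (isSymmetric_toEuclideanLin_iff.mpr hQ).orthogonal_range]
    intro v hv
    rw [EuclideanSpace.inner_eq_star_dotProduct, dotProduct_comm]
    exact hd _ (congrArg WithLp.ofLp hv)
  obtain ⟨x, hx⟩ := hd_range
  exact ⟨WithLp.ofLp x, congrArg WithLp.ofLp hx⟩

theorem Matrix.IsHermitian.forall_quadratic_nonneg_iff [DecidableEq n] {Q : Matrix n n 𝕜}
    (hQ : Q.IsHermitian) (d : n → 𝕜) (s : ℝ) :
    (∀ w, 0 ≤ re (star w ⬝ᵥ Q *ᵥ w) - 2 * re (star d ⬝ᵥ w) + s) ↔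
      Q.PosSemidef ∧ (∃ x, Q *ᵥ x = d) ∧ ∀ x, Q *ᵥ x = d → re (star x ⬝ᵥ d) ≤ s := by
  constructor
  · intro hF
    have hray (u : n → 𝕜) : 0 ≤ re (star u ⬝ᵥ Q *ᵥ u) ∧
        (re (star u ⬝ᵥ Q *ᵥ u) = 0 → -2 * re (star d ⬝ᵥ u) = 0) := by
      refine nonneg_and_eq_zero_of_forall_quadratic_nonneg (s := s) fun t => ?_
      have := hF ((t : 𝕜) • u)
      rw [re_star_dotProduct_mulVec_ofReal_smul, re_dotProduct_ofReal_smul] at this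
      linarith
    have hker (v : n → 𝕜) (hv : Q *ᵥ v = 0) : star v ⬝ᵥ d = 0 := by
      set z := star v ⬝ᵥ d
      have hQz : Q *ᵥ (z • v) = 0 := by rw [mulVec_smul, hv, smul_zero]
      have hdz : star d ⬝ᵥ (z • v) = ((‖z‖ ^ 2 : ℝ) : 𝕜) := by
        rw [dotProduct_smul, smul_eq_mul, star_dotProduct, RCLike.star_def, RCLike.mul_conj,
          RCLike.ofReal_pow]
      have := (hray (z • v)).2 (by rw [hQz, dotProduct_zero, map_zero])
      rw [hdz, RCLike.ofReal_re] at this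
      simpa using this
    refine ⟨PosSemidef.of_dotProduct_mulVec_nonneg hQ fun x =>
        RCLike.nonneg_iff.2 ⟨(hray x).1, hQ.im_star_dotProduct_mulVec_self x⟩,
      hQ.exists_mulVec_eq hker, fun x hx => ?_⟩
    have := hF x
    rw [hx, re_star_dotProduct_comm d x] at this
    linarith
  · rintro ⟨hQ_psd, ⟨x, hx⟩, hs⟩ w
    have hsq := (RCLike.nonneg_iff.1 (hQ_psd.dotProduct_mulVec_nonneg (w - x))).1
    rw [hQ.re_sub_dotProduct_mulVec_sub hx w] at hsq
    linarith [hs x hx]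

end QuadraticForm

section Siegel

variable {n : Type*} [Fintype n]

theorem herm_eq_star_dotProduct (x y : n → ℂ) : herm x y = star y ⬝ᵥ x := by
  simp [herm, dotProduct, mul_comm]

theorem enormSq_eq_re_star_dotProduct (x : n → ℂ) : enormSq x = (star x ⬝ᵥ x).re := by
  simp [enormSq, dotProduct, Complex.sq_norm, Complex.normSq_apply]

def siegelDomain (n : Type*) [Fintype n] : Set (ℂ × (n → ℂ)) := {p | enormSq p.2 < p.1.im}

theorem mapsTo_siegelDomain_iff {lam : ℝ} (hlam : 0 < lam) (b : ℂ) (a c : n → ℂ)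
    (M : Matrix n n ℂ) :
    MapsTo (fun p : ℂ × (n → ℂ) => ((lam : ℂ) * p.1 + 2 * I * herm p.2 a + b, M *ᵥ p.2 + c))
        (siegelDomain n) (siegelDomain n) ↔
      ∀ w, enormSq (M *ᵥ w + c) ≤ lam * enormSq w + 2 * (herm w a).re + b.im := by
  have him (z : ℂ) (w : n → ℂ) : ((lam : ℂ) * z + 2 * I * herm w a + b).im
      = lam * z.im + 2 * (herm w a).re + b.im := by
    simp [Complex.mul_im]
  constructor
  · intro h w
    refine le_of_forall_pos_lt_add fun ε hε => ?_
    have hmem : (((enormSq w + ε / lam : ℝ) : ℂ) * I, w) ∈ siegelDomain n := by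
      simp only [siegelDomain, mem_ofPred_eq, mul_I_im, ofReal_re]
      linarith [div_pos hε hlam]
    have := h hmem
    simp only [siegelDomain, mem_ofPred_eq, him, mul_I_im, ofReal_re, mul_add,
      mul_div_cancel₀ _ hlam.ne'] at this
    linarith
  · rintro h ⟨z, w⟩ hzw
    simp only [siegelDomain, mem_ofPred_eq, him] at hzw ⊢
    linarith [h w, mul_lt_mul_of_pos_left hzw hlam]

theorem siegel_gap_eq_quadratic [DecidableEq n] (lam : ℝ) (b : ℂ) (a c : n → ℂ)
    (M : Matrix n n ℂ) (w : n → ℂ) :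
    lam * enormSq w + 2 * (herm w a).re + b.im - enormSq (M *ᵥ w + c) =
      (star w ⬝ᵥ ((lam : ℂ) • 1 - Mᴴ * M) *ᵥ w).re - 2 * (star (Mᴴ *ᵥ c - a) ⬝ᵥ w).re
        + (b.im - enormSq c) := by
  have hcross : (star w ⬝ᵥ Mᴴ *ᵥ c).re = (star c ⬝ᵥ M *ᵥ w).re := by
    rw [dotProduct_mulVec, ← star_mulVec, star_dotProduct, Complex.star_def, Complex.conj_re]
  simp only [enormSq_eq_re_star_dotProduct, herm_eq_star_dotProduct, sub_mulVec, smul_mulVec,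
    one_mulVec, ← mulVec_mulVec, dotProduct_sub, dotProduct_smul, star_add, add_dotProduct,
    dotProduct_add, star_sub, sub_dotProduct, star_mulVec, conjTranspose_conjTranspose,
    ← dotProduct_mulVec, smul_eq_mul, Complex.add_re, Complex.sub_re, Complex.re_ofReal_mul]
  linarith

end Siegel

theorem stmt4_general {N : ℕ} (lam : ℝ) (hlam : 0 < lam) (b : ℂ)
    (a c : Fin (N - 1) → ℂ) (M : Matrix (Fin (N - 1)) (Fin (N - 1)) ℂ)
    (φ : ℂ × (Fin (N - 1) → ℂ) → ℂ × (Fin (N - 1) → ℂ))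
    (hφ : ∀ p, φ p =
      ((lam : ℂ) * p.1 + 2 * Complex.I * herm p.2 a + b, M.mulVec p.2 + c)) :
    MapsTo φ {p : ℂ × (Fin (N - 1) → ℂ) | enormSq p.2 < p.1.im}
        {p : ℂ × (Fin (N - 1) → ℂ) | enormSq p.2 < p.1.im} ↔
      ((lam : ℂ) • (1 : Matrix (Fin (N - 1)) (Fin (N - 1)) ℂ) - Mᴴ * M).PosSemidef ∧
      (∃ x : Fin (N - 1) → ℂ,
        ((lam : ℂ) • (1 : Matrix (Fin (N - 1)) (Fin (N - 1)) ℂ) - Mᴴ * M).mulVec x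
          = Mᴴ.mulVec c - a) ∧
      (∀ x : Fin (N - 1) → ℂ,
        ((lam : ℂ) • (1 : Matrix (Fin (N - 1)) (Fin (N - 1)) ℂ) - Mᴴ * M).mulVec x
          = Mᴴ.mulVec c - a →
        b.im - enormSq c ≥ (herm (Mᴴ.mulVec c - a) x).re) := by
  obtain rfl : φ = _ := funext hφ
  have hQ : ((lam : ℂ) • (1 : Matrix (Fin (N - 1)) (Fin (N - 1)) ℂ) - Mᴴ * M).IsHermitian :=
    (isHermitian_one.smul (Complex.conj_ofReal lam)).sub (isHermitian_conjTranspose_mul_self M)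
  refine (mapsTo_siegelDomain_iff hlam b a c M).trans ?_
  simp only [← sub_nonneg (b := enormSq _), siegel_gap_eq_quadratic]
  simp only [herm_eq_star_dotProduct, ge_iff_le, ← RCLike.re_to_complex]
  exact hQ.forall_quadratic_nonneg_iff _ _

/-- The map `φ(z, w) = (λ z + 2i⟨w, a⟩ + b, M w + c)` is a self-map of the Siegel
half-plane `ℍ^N = {(z, w) : Im z > |w|²}` if and only if `Q = λI - Mᴴ M` is
Hermitian positive semi-definite, `Mᴴ c - a` lies in the range of `Q`, and
`Im b - |c|² ≥ xᴴ (Mᴴ c - a)` for any `x` with `Q x = Mᴴ c - a`. -/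
theorem stmt4 {N : ℕ} (hN : 2 ≤ N) (lam : ℝ) (hlam : 0 < lam) (b : ℂ)
    (a c : Fin (N - 1) → ℂ) (M : Matrix (Fin (N - 1)) (Fin (N - 1)) ℂ)
    (φ : ℂ × (Fin (N - 1) → ℂ) → ℂ × (Fin (N - 1) → ℂ))
    (hφ : ∀ p, φ p =
      ((lam : ℂ) * p.1 + 2 * Complex.I * herm p.2 a + b, M.mulVec p.2 + c)) :
    MapsTo φ {p : ℂ × (Fin (N - 1) → ℂ) | enormSq p.2 < p.1.im}
        {p : ℂ × (Fin (N - 1) → ℂ) | enormSq p.2 < p.1.im} ↔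
      ((lam : ℂ) • (1 : Matrix (Fin (N - 1)) (Fin (N - 1)) ℂ) - Mᴴ * M).PosSemidef ∧
      (∃ x : Fin (N - 1) → ℂ,
        ((lam : ℂ) • (1 : Matrix (Fin (N - 1)) (Fin (N - 1)) ℂ) - Mᴴ * M).mulVec x
          = Mᴴ.mulVec c - a) ∧
      (∀ x : Fin (N - 1) → ℂ,
        ((lam : ℂ) • (1 : Matrix (Fin (N - 1)) (Fin (N - 1)) ℂ) - Mᴴ * M).mulVec x
          = Mᴴ.mulVec c - a →
        b.im - enormSq c ≥ (herm (Mᴴ.mulVec c - a) x).re) :=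
  stmt4_general lam hlam b a c M φ hφ
end
end

section
/- Let A ∈ ℂ^{n×n} with ‖A‖ ≤ 1, let Q = I − Aᴴ A and P = I − A Aᴴ (both Hermitian positive semi-definite), and let c ∈ ℂ^n. If Aᴴ c lies in the range of Q, i.e. there exists x with Q x = Aᴴ c, then c lies in the range of P, i.e. there exists y with P y = c, and for any such x and y one has xᴴ(Aᴴ c) + |c|² = yᴴ c (both sides being nonnegative reals, independent of the choices of x and y). -/
/-! Proof idea: with `Q = 1 - Aᴴ A` and `P = 1 - A Aᴴ` one has `P A = A Q`, so from `Q x = Aᴴ c`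
the vector `y = c + A x` solves `P y = c`, and `yᴴ c = |c|² + xᴴ (Aᴴ c)`. Since `P` and `Q` are
Hermitian, `xᴴ (Q x') = (Q x)ᴴ x'` makes both sides independent of the chosen solutions, and
`xᴴ (Q x) = |x|² - |A x|² ≥ 0` because `‖A‖ ≤ 1`. -/

open Matrix Set Complex

noncomputable section

section herm

variable {m : Type*} [Fintype m]

theorem herm_eq_dotProduct (u v : m → ℂ) : herm u v = u ⬝ᵥ star v := rfl

theorem herm_add_right (u v w : m → ℂ) : herm u (v + w) = herm u v + herm u w := by
  simp only [herm_eq_dotProduct, star_add, dotProduct_add]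

theorem herm_self (u : m → ℂ) : herm u u = enormSq u := by
  simp only [herm, enormSq, ofReal_sum, ofReal_pow, mul_conj, normSq_eq_norm_sq]

theorem herm_mulVec_left (M : Matrix m m ℂ) (u v : m → ℂ) :
    herm (M *ᵥ u) v = herm u (Mᴴ *ᵥ v) := by
  rw [herm_eq_dotProduct, herm_eq_dotProduct, dotProduct_comm, dotProduct_mulVec, star_mulVec,
    conjTranspose_conjTranspose, dotProduct_comm]

theorem Matrix.IsHermitian.herm_eq_of_mulVec_eq {M : Matrix m m ℂ} (hM : M.IsHermitian)
    {v x x' : m → ℂ} (hx : M *ᵥ x = v) (hx' : M *ᵥ x' = v) : herm v x = herm v x' := by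
  have hsymm : ∀ z, M *ᵥ z = v → herm v z = herm x v := fun z hz =>
    calc herm v z = herm (M *ᵥ x) z := by rw [hx]
      _ = herm x (M *ᵥ z) := by rw [herm_mulVec_left, hM.eq]
      _ = herm x v := by rw [hz]
  rw [hsymm x hx, hsymm x' hx']

end herm

section contraction

variable {m : Type*} [Fintype m] [DecidableEq m]

theorem isHermitian_one_sub_conjTranspose_mul_self (A : Matrix m m ℂ) :
    (1 - Aᴴ * A).IsHermitian :=
  isHermitian_one.sub (isHermitian_conjTranspose_mul_self A)

theorem isHermitian_one_sub_mul_conjTranspose_self (A : Matrix m m ℂ) :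
    (1 - A * Aᴴ).IsHermitian :=
  isHermitian_one.sub (isHermitian_mul_conjTranspose_self A)

theorem one_sub_mul_conjTranspose_self_mul (A : Matrix m m ℂ) :
    (1 - A * Aᴴ) * A = A * (1 - Aᴴ * A) := by
  simp only [Matrix.sub_mul, Matrix.mul_sub, Matrix.one_mul, Matrix.mul_one, Matrix.mul_assoc]

theorem one_sub_mul_conjTranspose_self_mulVec_add {A : Matrix m m ℂ} {c x : m → ℂ}
    (hx : (1 - Aᴴ * A) *ᵥ x = Aᴴ *ᵥ c) : (1 - A * Aᴴ) *ᵥ (c + A *ᵥ x) = c := by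
  rw [mulVec_add, mulVec_mulVec, one_sub_mul_conjTranspose_self_mul, ← mulVec_mulVec, hx,
    mulVec_mulVec, sub_mulVec, one_mulVec, sub_add_cancel]

theorem herm_one_sub_conjTranspose_mul_self_mulVec (A : Matrix m m ℂ) (x : m → ℂ) :
    herm ((1 - Aᴴ * A) *ᵥ x) x = ((enormSq x - enormSq (A *ᵥ x) : ℝ) : ℂ) := by
  rw [sub_mulVec, one_mulVec, herm_eq_dotProduct, sub_dotProduct, ← herm_eq_dotProduct,
    ← herm_eq_dotProduct, ← mulVec_mulVec, herm_mulVec_left, conjTranspose_conjTranspose,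
    herm_self, herm_self, ofReal_sub]

end contraction

/-- Let `‖A‖ ≤ 1`, `Q = I - Aᴴ A`, `P = I - A Aᴴ`. If `Aᴴ c` is in the range of
`Q`, then `c` is in the range of `P`, and `xᴴ (Aᴴ c) + |c|² = yᴴ c` for any `x`, `y`
with `Q x = Aᴴ c` and `P y = c`, both sides being nonnegative reals. -/
theorem stmt5 {n : ℕ} (A : Matrix (Fin n) (Fin n) ℂ) (hA : OpNormLeOne A)
    (c : Fin n → ℂ)
    (hx : ∃ x : Fin n → ℂ,
      ((1 : Matrix (Fin n) (Fin n) ℂ) - Aᴴ * A).mulVec x = Aᴴ.mulVec c) :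
    (∃ y : Fin n → ℂ, ((1 : Matrix (Fin n) (Fin n) ℂ) - A * Aᴴ).mulVec y = c) ∧
    ∀ x y : Fin n → ℂ,
      ((1 : Matrix (Fin n) (Fin n) ℂ) - Aᴴ * A).mulVec x = Aᴴ.mulVec c →
      ((1 : Matrix (Fin n) (Fin n) ℂ) - A * Aᴴ).mulVec y = c →
      herm (Aᴴ.mulVec c) x + (enormSq c : ℂ) = herm c y ∧
      (herm c y).im = 0 ∧ 0 ≤ (herm c y).re := by
  obtain ⟨x₀, hx₀⟩ := hx
  have hy₀ := one_sub_mul_conjTranspose_self_mulVec_add hx₀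
  refine ⟨⟨_, hy₀⟩, fun x y hx hy => ?_⟩
  have hx_indep : herm (Aᴴ *ᵥ c) x = herm (Aᴴ *ᵥ c) x₀ :=
    (isHermitian_one_sub_conjTranspose_mul_self A).herm_eq_of_mulVec_eq hx hx₀
  have hy_indep : herm c y = herm c (c + A *ᵥ x₀) :=
    (isHermitian_one_sub_mul_conjTranspose_self A).herm_eq_of_mulVec_eq hy hy₀
  have hy₀val : herm c (c + A *ᵥ x₀) = herm (Aᴴ *ᵥ c) x₀ + enormSq c := by
    rw [herm_add_right, herm_self, herm_mulVec_left, conjTranspose_conjTranspose, add_comm]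
  have hx₀val : herm (Aᴴ *ᵥ c) x₀ = ((enormSq x₀ - enormSq (A *ᵥ x₀) : ℝ) : ℂ) := by
    rw [← hx₀, herm_one_sub_conjTranspose_mul_self_mulVec]
  have hc : 0 ≤ enormSq c := Finset.sum_nonneg fun j _ => by positivity
  rw [hx_indep, hy_indep, hy₀val, hx₀val]
  refine ⟨rfl, ?_, ?_⟩
  · norm_cast
  · norm_cast; linarith [hA x₀]
end
end

section
/- For all real numbers u > 0, v ≥ 0 and t > 0 one has (1 + e^{−2tu} − 2 e^{−tu} cos(vt)) / ((1 − e^{−2tu})·t) ≤ (u² + v²)/(2u), and the left-hand side tends to (u² + v²)/(2u) as t → 0⁺. -/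
/-!
Put `a = e^{-tu}`. Since `1 + a² - 2a cos(vt) = (1 - a)² + 4a sin²(vt/2)`, the quotient splits as
`tanh(tu/2)/t + 2 sin²(vt/2)/(t sinh(tu))`. The bounds `tanh y ≤ y`, `sin² y ≤ y²` and `y ≤ sinh y`
bound the two terms by `u/2` and `v²/(2u)`, and as `t → 0⁺` both terms are, up to factors tending
to constants, difference quotients at `0` converging to exactly these values.
-/

open Filter Real Set Topology

lemma two_mul_one_sub_exp_neg_le (x : ℝ) (hx : 0 ≤ x) :
    2 * (1 - exp (-x)) ≤ x * (1 + exp (-x)) := by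
  let g : ℝ → ℝ := fun y ↦ y * (1 + exp (-y)) - 2 * (1 - exp (-y))
  have hg : ∀ y, HasDerivAt g (1 - (1 + y) * exp (-y)) y := fun y ↦ by
    have hexp := (hasDerivAt_neg y).exp
    refine (((hasDerivAt_id y).mul ((hasDerivAt_const y 1).add hexp)).sub
      (((hasDerivAt_const y 1).sub hexp).const_mul 2)).congr_deriv ?_
    simp only [id, Pi.add_apply]
    ring
  -- `1 + y ≤ e^y` holds for every real `y`, so `g` is monotone on all of `ℝ`
  have hg' : ∀ y, 0 ≤ 1 - (1 + y) * exp (-y) := fun y ↦ by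
    have := mul_le_mul_of_nonneg_right (add_one_le_exp y) (exp_pos (-y)).le
    rw [← exp_add, add_neg_cancel, exp_zero, add_comm] at this
    linarith
  simpa [g] using monotone_of_hasDerivAt_nonneg hg hg' hx

lemma two_mul_mul_exp_neg_le (x : ℝ) (hx : 0 ≤ x) :
    2 * x * exp (-x) ≤ 1 - exp (-x) ^ 2 := by
  have hsinh := mul_le_mul_of_nonneg_right (self_le_sinh_iff.mpr hx) (exp_pos (-x)).le
  rw [sinh_eq, sub_div, sub_mul, div_mul_eq_mul_div, div_mul_eq_mul_div, ← exp_add,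
    add_neg_cancel, exp_zero] at hsinh
  nlinarith

lemma cos_eq_one_sub_two_mul_sin_half_sq (θ : ℝ) : cos θ = 1 - 2 * sin (θ / 2) ^ 2 := by
  have := cos_two_mul (θ / 2)
  rw [mul_div_cancel₀ θ two_ne_zero] at this
  rw [this, cos_sq']
  ring

lemma tendsto_div_self_nhdsGT_of_hasDerivAt {f : ℝ → ℝ} {f' : ℝ} (hf : HasDerivAt f f' 0)
    (h0 : f 0 = 0) : Tendsto (fun t ↦ f t / t) (𝓝[>] 0) (𝓝 f') := by
  simpa [h0, div_eq_inv_mul] using hf.tendsto_slope_zero_right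

noncomputable def dampedCosRatio (u v t : ℝ) : ℝ :=
  (1 + exp (-2 * t * u) - 2 * exp (-t * u) * cos (v * t)) / ((1 - exp (-2 * t * u)) * t)

lemma dampedCosRatio_eq (u v t : ℝ) :
    dampedCosRatio u v t = (1 - exp (-(t * u))) / ((1 + exp (-(t * u))) * t) +
      4 * exp (-(t * u)) * sin (v * t / 2) ^ 2 / ((1 - exp (-(t * u)) ^ 2) * t) := by
  set a := exp (-(t * u))
  have hsq : exp (-2 * t * u) = a ^ 2 := by rw [← exp_nat_mul]; ring_nf
  have hfactor : (1 - a) ^ 2 / ((1 - a ^ 2) * t) = (1 - a) / ((1 + a) * t) := by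
    rcases eq_or_ne (1 - a) 0 with h | h
    · simp [h]
    · rw [show 1 - a ^ 2 = (1 - a) * (1 + a) by ring, mul_assoc, sq, mul_div_mul_left _ _ h]
  have hlin : exp (-t * u) = a := by rw [neg_mul]
  rw [dampedCosRatio, hsq, hlin, cos_eq_one_sub_two_mul_sin_half_sq, ← hfactor, ← add_div]
  ring

lemma dampedCosRatio_le {u t : ℝ} (v : ℝ) (hu : 0 < u) (ht : 0 < t) :
    dampedCosRatio u v t ≤ (u ^ 2 + v ^ 2) / (2 * u) := by
  set a := exp (-(t * u))
  have hx : 0 ≤ t * u := by positivity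
  have ha : 0 < a := exp_pos _
  have ha1 : a < 1 := Real.exp_lt_one_iff.mpr (by linarith [mul_pos ht hu])
  have hfirst : (1 - a) / ((1 + a) * t) ≤ u / 2 := by
    rw [div_le_iff₀ (by positivity)]
    nlinarith [two_mul_one_sub_exp_neg_le _ hx]
  have hsecond : 4 * a * sin (v * t / 2) ^ 2 / ((1 - a ^ 2) * t) ≤ v ^ 2 / (2 * u) := by
    rw [div_le_div_iff₀ (mul_pos (by nlinarith) ht) (by positivity)]
    calc 4 * a * sin (v * t / 2) ^ 2 * (2 * u) ≤ 4 * a * (v * t / 2) ^ 2 * (2 * u) := by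
          gcongr 4 * a * ?_ * (2 * u); exact sin_sq_le_sq
      _ = v ^ 2 * t * (2 * (t * u) * a) := by ring
      _ ≤ v ^ 2 * t * (1 - a ^ 2) := by gcongr; exact two_mul_mul_exp_neg_le _ hx
      _ = v ^ 2 * ((1 - a ^ 2) * t) := by ring
  rw [dampedCosRatio_eq]
  calc _ ≤ u / 2 + v ^ 2 / (2 * u) := add_le_add hfirst hsecond
    _ = (u ^ 2 + v ^ 2) / (2 * u) := by field_simp

lemma tendsto_dampedCosRatio {u : ℝ} (v : ℝ) (hu : 0 < u) :
    Tendsto (dampedCosRatio u v) (𝓝[>] 0) (𝓝 ((u ^ 2 + v ^ 2) / (2 * u))) := by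
  have hexp : Tendsto (fun t ↦ exp (-(t * u))) (𝓝[>] 0) (𝓝 1) := by
    have : Continuous (fun t ↦ exp (-(t * u))) := by fun_prop
    simpa using this.tendsto 0 |>.mono_left nhdsWithin_le_nhds
  have hdiff : Tendsto (fun t ↦ (1 - exp (-(t * u))) / t) (𝓝[>] 0) (𝓝 u) := by
    refine tendsto_div_self_nhdsGT_of_hasDerivAt ?_ (by simp)
    simpa using (((hasDerivAt_id (0 : ℝ)).mul_const u).neg.exp).const_sub 1
  have hsin : Tendsto (fun t ↦ sin (v * t / 2) / t) (𝓝[>] 0) (𝓝 (v / 2)) := by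
    refine tendsto_div_self_nhdsGT_of_hasDerivAt ?_ (by simp)
    simpa using (((hasDerivAt_id (0 : ℝ)).const_mul v).div_const 2).sin
  have hlim := (hdiff.div (hexp.const_add 1) (by norm_num)).add
    (((tendsto_const_nhds (x := (4 : ℝ))).mul hexp).mul (hsin.pow 2) |>.div
      (hdiff.mul (hexp.const_add 1)) (by positivity))
  rw [show (u ^ 2 + v ^ 2) / (2 * u) = u / (1 + 1) + 4 * 1 * (v / 2) ^ 2 / (u * (1 + 1)) by
    field_simp; ring]
  refine hlim.congr' ?_
  filter_upwards [self_mem_nhdsWithin] with t ht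
  rw [dampedCosRatio_eq]
  have ht0 : t ≠ 0 := ht.ne'
  have ha1 : exp (-(t * u)) < 1 := Real.exp_lt_one_iff.mpr (by linarith [mul_pos ht hu])
  have hne : 1 - exp (-(t * u)) ≠ 0 := by linarith
  have hne' : 1 + exp (-(t * u)) ≠ 0 := by positivity
  rw [show 1 - exp (-(t * u)) ^ 2 = (1 - exp (-(t * u))) * (1 + exp (-(t * u))) by ring]
  simp only [Pi.div_apply]
  field_simp

theorem stmt9_general (u v : ℝ) (hu : 0 < u) :
    (∀ t : ℝ, 0 < t →
      (1 + Real.exp (-2 * t * u) - 2 * Real.exp (-t * u) * Real.cos (v * t)) /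
        ((1 - Real.exp (-2 * t * u)) * t) ≤ (u ^ 2 + v ^ 2) / (2 * u)) ∧
    Tendsto (fun t : ℝ =>
      (1 + Real.exp (-2 * t * u) - 2 * Real.exp (-t * u) * Real.cos (v * t)) /
        ((1 - Real.exp (-2 * t * u)) * t))
      (nhdsWithin 0 (Ioi 0)) (nhds ((u ^ 2 + v ^ 2) / (2 * u))) :=
  ⟨fun _ ht ↦ dampedCosRatio_le v hu ht, tendsto_dampedCosRatio v hu⟩

/-- For `u > 0`, `v ≥ 0`, the function
`h(t) = (1 + e^{-2tu} - 2 e^{-tu} cos(vt)) / ((1 - e^{-2tu}) t)` satisfies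
`h(t) ≤ (u² + v²)/(2u)` for all `t > 0`, and `h(t) → (u² + v²)/(2u)` as `t → 0⁺`. -/
theorem stmt9 (u v : ℝ) (hu : 0 < u) (hv : 0 ≤ v) :
    (∀ t : ℝ, 0 < t →
      (1 + Real.exp (-2 * t * u) - 2 * Real.exp (-t * u) * Real.cos (v * t)) /
        ((1 - Real.exp (-2 * t * u)) * t) ≤ (u ^ 2 + v ^ 2) / (2 * u)) ∧
    Tendsto (fun t : ℝ =>
      (1 + Real.exp (-2 * t * u) - 2 * Real.exp (-t * u) * Real.cos (v * t)) /
        ((1 - Real.exp (-2 * t * u)) * t))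
      (nhdsWithin 0 (Ioi 0)) (nhds ((u ^ 2 + v ^ 2) / (2 * u))) :=
  stmt9_general u v hu
end

section
/- Let N = 1 + p + q + r and write points of ℂ^N as (z, u, v, w) ∈ ℂ × ℂ^p × ℂ^q × ℂ^r, so that ℍ^N = {(z,u,v,w) : Im z > |u|² + |v|² + |w|²}. Let A = diag(λ₁, …, λ_r) with λ_j = exp(−u_j + i v_j), u_j > 0, v_j ≥ 0 (so |λ_j| < 1), let b ∈ ℂ and c = (c₁, …, c_r) ∈ ℂ^r, and assume ψ(z,u,v,w) = (z + 2i⟨w, c⟩ + b, u, v, A w) is a self-map of ℍ^N. If Im(b) ≥ Σ_{j=1}^{r} (u_j² + v_j²)/(2 u_j |1 − λ_j|²) · |c_j|², then ψ can be embedded into a semigroup of holomorphic self-maps of ℍ^N. -/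
open Matrix Set Complex Filter

noncomputable section

/-- `(φ t)_{t ≥ 0}` is a (continuous) semigroup of holomorphic self-maps of `U`. -/
def IsHolSemigroupOn {E : Type*} [NormedAddCommGroup E] [NormedSpace ℂ E]
    (U : Set E) (φ : ℝ → E → E) : Prop :=
  (∀ t : ℝ, 0 ≤ t → MapsTo (φ t) U U) ∧
  (∀ t : ℝ, 0 ≤ t → DifferentiableOn ℂ (φ t) U) ∧
  (∀ z ∈ U, φ 0 z = z) ∧
  (∀ s : ℝ, 0 ≤ s → ∀ t : ℝ, 0 ≤ t → ∀ z ∈ U, φ (s + t) z = φ s (φ t z)) ∧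
  (∀ K : Set E, K ⊆ U → IsCompact K →
    TendstoUniformlyOn (fun t => φ t) id (nhdsWithin 0 (Ioi 0)) K)

/-- `ℂ^N = ℂ × ℂ^p × ℂ^q × ℂ^r`. -/
abbrev E4 (p q r : ℕ) : Type := ℂ × (Fin p → ℂ) × (Fin q → ℂ) × (Fin r → ℂ)

/-- The Siegel half-plane `ℍ^N = {(z,u,v,w) : Im z > |u|² + |v|² + |w|²}`. -/
def Siegel4 (p q r : ℕ) : Set (E4 p q r) :=
  {x | enormSq x.2.1 + enormSq x.2.2.1 + enormSq x.2.2.2 < x.1.im}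

/-!
The semigroup is explicit. With `α_j = -u_j + i v_j` and `ρ_α(t) = (1 - e^{tα}) / (1 - e^α)`, put
`φ_t(z, u, v, w) = (z + 2i⟨w, c_t⟩ + t b, u, v, e^{tα} w)` where `(c_t)_j = c_j · conj ρ_{α_j}(t)`.
The cocycle identity `ρ(s + t) = ρ(t) + e^{tα} ρ(s)` gives `φ_{s+t} = φ_s ∘ φ_t`, and `ρ(1) = 1`
gives `φ_1 = ψ`. That `φ_t` preserves `ℍ^N` reduces, coordinate by coordinate and after completing
the square in `|w_j|`, to a bound on `|ρ_{α_j}(t)|²`, which follows from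
`2s |1 - e^{-s+iθ}|² ≤ (s² + θ²)(1 - e^{-2s})` for `s ≥ 0`: split
`|1 - e^{-s+iθ}|² = (1 - e^{-s})² + 2e^{-s}(1 - cos θ)` and use `tanh (s/2) ≤ s/2`, `s ≤ sinh s`
and `1 - cos θ ≤ θ²/2`.
-/

open Topology ComplexConjugate

theorem Real.two_mul_one_sub_exp_neg_le {s : ℝ} (hs : 0 ≤ s) :
    2 * (1 - Real.exp (-s)) ≤ s * (1 + Real.exp (-s)) := by
  let f : ℝ → ℝ := fun x => x * (1 + Real.exp (-x)) - 2 * (1 - Real.exp (-x))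
  have hf : ∀ x, HasDerivAt f (1 - Real.exp (-x) - x * Real.exp (-x)) x := by
    intro x
    have he : HasDerivAt (fun x => Real.exp (-x)) (-Real.exp (-x)) x := by
      simpa using (hasDerivAt_neg x).exp
    refine (((hasDerivAt_id' x).mul (he.const_add 1)).sub
      ((he.const_sub 1).const_mul 2)).congr_deriv ?_
    ring
  have hmono : MonotoneOn f (Ici 0) := by
    refine monotoneOn_of_deriv_nonneg (convex_Ici 0)
      (fun x _ => (hf x).continuousAt.continuousWithinAt)
      (fun x _ => (hf x).differentiableAt.differentiableWithinAt) fun x _ => ?_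
    have hexp : Real.exp x * Real.exp (-x) = 1 := by rw [← Real.exp_add, add_neg_cancel, Real.exp_zero]
    rw [(hf x).deriv]
    nlinarith [Real.add_one_le_exp x, Real.exp_pos (-x)]
  simpa [f] using hmono self_mem_Ici (mem_Ici.2 hs) hs

theorem Real.two_mul_mul_exp_neg_le {s : ℝ} (hs : 0 ≤ s) :
    2 * s * Real.exp (-s) ≤ 1 - Real.exp (-s) ^ 2 := by
  have hsinh := Real.self_le_sinh_iff.2 hs
  have hexp : Real.exp s * Real.exp (-s) = 1 := by rw [← Real.exp_add, add_neg_cancel, Real.exp_zero]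
  rw [Real.sinh_eq] at hsinh
  nlinarith [Real.exp_pos (-s)]

theorem Complex.sq_norm_one_sub_exp (z : ℂ) :
    ‖1 - exp z‖ ^ 2 = (1 - Real.exp z.re) ^ 2 + 2 * Real.exp z.re * (1 - Real.cos z.im) := by
  rw [← normSq_eq_norm_sq, normSq_apply]
  simp only [sub_re, one_re, exp_re, sub_im, one_im, exp_im]
  linear_combination Real.exp z.re ^ 2 * Real.sin_sq_add_cos_sq z.im

theorem Complex.two_mul_neg_re_mul_sq_norm_one_sub_exp_le {z : ℂ} (hz : z.re ≤ 0) :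
    2 * -z.re * ‖1 - exp z‖ ^ 2 ≤ ‖z‖ ^ 2 * (1 - ‖exp z‖ ^ 2) := by
  rw [sq_norm_one_sub_exp, norm_exp, ← normSq_eq_norm_sq, normSq_apply]
  have hs : 0 ≤ -z.re := neg_nonneg.2 hz
  have hexp : Real.exp z.re ≤ 1 := Real.exp_le_one_iff.2 hz
  have htanh := Real.two_mul_one_sub_exp_neg_le hs
  have hsinh := Real.two_mul_mul_exp_neg_le hs
  have hcos := Real.one_sub_sq_div_two_le_cos (x := z.im)
  rw [neg_neg] at htanh hsinh
  nlinarith [mul_le_mul_of_nonneg_left htanh (mul_nonneg hs (sub_nonneg.2 hexp)),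
    mul_le_mul_of_nonneg_left hsinh (sq_nonneg z.im),
    mul_le_mul_of_nonneg_left hcos (mul_nonneg hs (Real.exp_pos z.re).le)]

theorem Complex.exp_ne_one_of_re_neg {z : ℂ} (hz : z.re < 0) : exp z ≠ 1 := by
  intro h
  have := congrArg norm h
  rw [norm_exp, norm_one, Real.exp_eq_one_iff] at this
  exact hz.ne this

theorem Complex.sq_norm_mul_le_of_sq_norm_le {a γ : ℂ} {B : ℝ} (ha : ‖a‖ < 1)
    (hγ : ‖γ‖ ^ 2 ≤ (1 - ‖a‖ ^ 2) * B) (w : ℂ) :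
    ‖a * w‖ ^ 2 ≤ ‖w‖ ^ 2 + 2 * (w * conj γ).re + B := by
  have hre : -(‖w‖ * ‖γ‖) ≤ (w * conj γ).re := by
    have := abs_re_le_norm (w * conj γ)
    rw [norm_mul, RCLike.norm_conj] at this
    linarith [neg_abs_le (w * conj γ).re]
  have hA : 0 < 1 - ‖a‖ ^ 2 := by nlinarith [norm_nonneg a]
  rw [norm_mul, mul_pow]
  nlinarith [sq_nonneg ((1 - ‖a‖ ^ 2) * ‖w‖ - ‖γ‖), mul_le_mul_of_nonneg_left hre hA.le]

theorem tendstoUniformlyOn_of_continuous_uncurry {α β γ : Type*} [TopologicalSpace α]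
    [TopologicalSpace β] [UniformSpace γ] {F : α → β → γ} (hF : Continuous (Function.uncurry F))
    (x : α) {K : Set β} (hK : IsCompact K) : TendstoUniformlyOn F (F x) (𝓝 x) K :=
  ContinuousMap.tendsto_iff_forall_isCompact_tendstoUniformlyOn.1
    ((ContinuousMap.curry ⟨_, hF⟩).continuous.tendsto x) K hK

def flowWeight (α : ℂ) (t : ℝ) : ℂ := (1 - exp (t * α)) / (1 - exp α)

@[simp]
theorem flowWeight_zero (α : ℂ) : flowWeight α 0 = 0 := by simp [flowWeight]

theorem flowWeight_one {α : ℂ} (hα : exp α ≠ 1) : flowWeight α 1 = 1 := by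
  simp [flowWeight, div_self (sub_ne_zero.2 hα.symm)]

theorem flowWeight_add (α : ℂ) (s t : ℝ) :
    flowWeight α (s + t) = flowWeight α t + exp (t * α) * flowWeight α s := by
  simp only [flowWeight, ofReal_add, add_mul, exp_add]
  ring

def criticalDrift (α c : ℂ) : ℝ := ‖α‖ ^ 2 / (2 * -α.re * ‖1 - exp α‖ ^ 2) * ‖c‖ ^ 2

theorem sq_norm_flowWeight_le {α : ℂ} (hα : α.re < 0) {t : ℝ} (ht : 0 < t) :
    ‖flowWeight α t‖ ^ 2 ≤
      (1 - ‖exp (t * α)‖ ^ 2) * (t * (‖α‖ ^ 2 / (2 * -α.re * ‖1 - exp α‖ ^ 2))) := by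
  have hre : (t * α).re = t * α.re := by simp
  have key := two_mul_neg_re_mul_sq_norm_one_sub_exp_le (z := t * α)
    (by rw [hre]; exact mul_nonpos_of_nonneg_of_nonpos ht.le hα.le)
  rw [hre, norm_mul, norm_real, Real.norm_of_nonneg ht.le] at key
  have hden : 0 < ‖1 - exp α‖ := norm_pos_iff.2 (sub_ne_zero.2 (exp_ne_one_of_re_neg hα).symm)
  have hneg : 0 < 2 * -(t * α.re) := by nlinarith
  have hrhs : (1 - ‖exp (t * α)‖ ^ 2) * (t * (‖α‖ ^ 2 / (2 * -α.re * ‖1 - exp α‖ ^ 2))) =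
      (t * ‖α‖) ^ 2 * (1 - ‖exp (t * α)‖ ^ 2) / (2 * -(t * α.re)) / ‖1 - exp α‖ ^ 2 := by
    field_simp
  rw [flowWeight, norm_div, div_pow, hrhs]
  gcongr
  rwa [le_div_iff₀ hneg, mul_comm]

theorem sq_norm_exp_mul_le {α : ℂ} (hα : α.re < 0) (c w : ℂ) {t : ℝ} (ht : 0 < t) :
    ‖exp (t * α) * w‖ ^ 2 ≤
      ‖w‖ ^ 2 + 2 * (w * conj (c * conj (flowWeight α t))).re + t * criticalDrift α c := by
  refine sq_norm_mul_le_of_sq_norm_le ?_ ?_ w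
  · rw [norm_exp]
    simpa using mul_neg_of_pos_of_neg ht hα
  · rw [norm_mul, RCLike.norm_conj, mul_pow, criticalDrift]
    have := mul_le_mul_of_nonneg_left (sq_norm_flowWeight_le hα ht) (sq_nonneg ‖c‖)
    linarith

section SiegelFlow

variable {p q r : ℕ} (α c : Fin r → ℂ) (b : ℂ)

def siegelFlow (t : ℝ) (x : E4 p q r) : E4 p q r :=
  (x.1 + 2 * I * herm x.2.2.2 (fun j => c j * conj (flowWeight (α j) t)) + t * b,
    x.2.1, x.2.2.1, fun j => exp (t * α j) * x.2.2.2 j)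

theorem siegelFlow_zero (x : E4 p q r) : siegelFlow α c b 0 x = x := by
  simp [siegelFlow, herm]

theorem siegelFlow_add (s t : ℝ) (x : E4 p q r) :
    siegelFlow α c b (s + t) x = siegelFlow α c b s (siegelFlow α c b t x) := by
  have hherm : herm x.2.2.2 (fun j => c j * conj (flowWeight (α j) (s + t))) =
      herm x.2.2.2 (fun j => c j * conj (flowWeight (α j) t)) +
        herm (fun j => exp (t * α j) * x.2.2.2 j) (fun j => c j * conj (flowWeight (α j) s)) := by
    simp only [herm, ← Finset.sum_add_distrib, flowWeight_add, map_add, map_mul, conj_conj]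
    refine Finset.sum_congr rfl fun j _ => ?_
    ring
  simp only [siegelFlow, hherm, ofReal_add, Prod.mk.injEq, true_and]
  refine ⟨by ring, funext fun j => ?_⟩
  rw [add_mul, exp_add]
  ring

theorem continuous_uncurry_siegelFlow :
    Continuous (Function.uncurry (siegelFlow α c b : ℝ → E4 p q r → E4 p q r)) := by
  simp only [Function.uncurry_def, siegelFlow, herm, flowWeight]
  fun_prop

theorem differentiable_siegelFlow (t : ℝ) :
    Differentiable ℂ (siegelFlow α c b t : E4 p q r → E4 p q r) := by
  unfold siegelFlow herm
  fun_prop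

theorem siegelFlow_mapsTo (hα : ∀ j, (α j).re < 0) (hb : ∑ j, criticalDrift (α j) (c j) ≤ b.im)
    {t : ℝ} (ht : 0 ≤ t) : MapsTo (siegelFlow α c b t) (Siegel4 p q r) (Siegel4 p q r) := by
  rcases ht.eq_or_lt with rfl | ht
  · intro x hx
    rwa [siegelFlow_zero]
  intro x hx
  set w := x.2.2.2
  have hw : enormSq (fun j => exp (t * α j) * w j) ≤
      enormSq w + 2 * (herm w (fun j => c j * conj (flowWeight (α j) t))).re + t * b.im :=
    calc _ ≤ ∑ j, (‖w j‖ ^ 2 + 2 * (w j * conj (c j * conj (flowWeight (α j) t))).re +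
            t * criticalDrift (α j) (c j)) :=
          Finset.sum_le_sum fun j _ => sq_norm_exp_mul_le (hα j) (c j) (w j) ht
      _ = enormSq w + 2 * (herm w (fun j => c j * conj (flowWeight (α j) t))).re +
            t * ∑ j, criticalDrift (α j) (c j) := by
          simp only [Finset.sum_add_distrib, enormSq, herm, re_sum, Finset.mul_sum]
      _ ≤ _ := by gcongr
  simp [Siegel4, siegelFlow] at hx ⊢
  linarith

theorem isHolSemigroupOn_siegelFlow (hα : ∀ j, (α j).re < 0)
    (hb : ∑ j, criticalDrift (α j) (c j) ≤ b.im) :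
    IsHolSemigroupOn (Siegel4 p q r) (siegelFlow α c b) := by
  refine ⟨fun t ht => siegelFlow_mapsTo α c b hα hb ht,
    fun t _ => (differentiable_siegelFlow α c b t).differentiableOn,
    fun x _ => siegelFlow_zero α c b x, fun s _ t _ x _ => siegelFlow_add α c b s t x,
    fun K _ hK => ?_⟩
  have hid : siegelFlow α c b 0 = (id : E4 p q r → E4 p q r) := funext (siegelFlow_zero α c b)
  have h := tendstoUniformlyOn_of_continuous_uncurry (continuous_uncurry_siegelFlow α c b) 0 hK
  rw [hid] at h
  exact fun u hu => (h u hu).filter_mono nhdsWithin_le_nhds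

end SiegelFlow

theorem stmt10_general {p q r : ℕ} (uu vv : Fin r → ℝ)
    (huu : ∀ j, 0 < uu j)
    (d : Fin r → ℂ)
    (hd : ∀ j, d j = Complex.exp (-(uu j : ℂ) + (vv j : ℂ) * Complex.I))
    (b : ℂ) (c : Fin r → ℂ)
    (ψ : E4 p q r → E4 p q r)
    (hψ : ∀ x, ψ x = (x.1 + 2 * Complex.I * herm x.2.2.2 c + b,
      x.2.1, x.2.2.1, (Matrix.diagonal d).mulVec x.2.2.2))
    (hb : b.im ≥ ∑ j : Fin r,
      (uu j ^ 2 + vv j ^ 2) / (2 * uu j * ‖1 - d j‖ ^ 2) * ‖c j‖ ^ 2) :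
    ∃ φt : ℝ → E4 p q r → E4 p q r,
      IsHolSemigroupOn (Siegel4 p q r) φt ∧ ∀ z ∈ Siegel4 p q r, φt 1 z = ψ z := by
  set α : Fin r → ℂ := fun j => -(uu j : ℂ) + (vv j : ℂ) * I
  have hdα : ∀ j, d j = exp (α j) := hd
  have hre : ∀ j, (α j).re = -uu j := fun j => by simp [α]
  have hnorm : ∀ j, ‖α j‖ ^ 2 = uu j ^ 2 + vv j ^ 2 := fun j => by
    rw [← normSq_eq_norm_sq, normSq_apply]
    simp [α]
    ring
  have hα : ∀ j, (α j).re < 0 := fun j => by simpa [hre j] using huu j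
  refine ⟨siegelFlow α c b, isHolSemigroupOn_siegelFlow α c b hα ?_, fun x _ => ?_⟩
  · simpa only [criticalDrift, hre, hnorm, neg_neg, ← hdα] using hb
  · simp only [hψ, siegelFlow, flowWeight_one (exp_ne_one_of_re_neg (hα _)), map_one, mul_one,
      ofReal_one, one_mul]
    congr
    ext j
    rw [Matrix.mulVec_diagonal, hdα]

/-- Let `ψ(z,u,v,w) = (z + 2i⟨w,c⟩ + b, u, v, Aw)` be a parabolic self-map of
`ℍ^N` with `A = diag(λ₁, …, λ_r)`, `λ_j = exp(-u_j + i v_j)`, `u_j > 0`, `v_j ≥ 0`.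
If `Im b ≥ ∑_j (u_j² + v_j²)/(2 u_j |1 - λ_j|²) |c_j|²`, then `ψ` embeds into a
semigroup of holomorphic self-maps of `ℍ^N`. -/
theorem stmt10 {p q r : ℕ} (uu vv : Fin r → ℝ)
    (huu : ∀ j, 0 < uu j) (hvv : ∀ j, 0 ≤ vv j)
    (d : Fin r → ℂ)
    (hd : ∀ j, d j = Complex.exp (-(uu j : ℂ) + (vv j : ℂ) * Complex.I))
    (b : ℂ) (c : Fin r → ℂ)
    (ψ : E4 p q r → E4 p q r)
    (hψ : ∀ x, ψ x = (x.1 + 2 * Complex.I * herm x.2.2.2 c + b,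
      x.2.1, x.2.2.1, (Matrix.diagonal d).mulVec x.2.2.2))
    (hself : MapsTo ψ (Siegel4 p q r) (Siegel4 p q r))
    (hb : b.im ≥ ∑ j : Fin r,
      (uu j ^ 2 + vv j ^ 2) / (2 * uu j * ‖1 - d j‖ ^ 2) * ‖c j‖ ^ 2) :
    ∃ φt : ℝ → E4 p q r → E4 p q r,
      IsHolSemigroupOn (Siegel4 p q r) φt ∧ ∀ z ∈ Siegel4 p q r, φt 1 z = ψ z :=
  stmt10_general uu vv huu d hd b c ψ hψ hb
end
end

section
/- Let N = 1 + p + q and write points of ℂ^N as (z, u, v) ∈ ℂ × ℂ^p × ℂ^q, so that ℍ^N = {(z,u,v) : Im z > |u|² + |v|²}. Let a ∈ ℂ^p, let b ∈ ℝ, and let D be a q×q diagonal matrix whose diagonal entries have modulus 1 and are different from 1. Then the parabolic automorphism ψ(z, u, v) = (z + 2i⟨u, a⟩ + i|a|² + b, u + a, D v) of ℍ^N can be embedded into a semigroup of holomorphic self-maps (in fact automorphisms) of ℍ^N. -/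
open Matrix Set Complex Filter

noncomputable section

/-- `ℂ^N = ℂ × ℂ^p × ℂ^q`. -/
abbrev E3 (p q : ℕ) : Type := ℂ × (Fin p → ℂ) × (Fin q → ℂ)

/-- The Siegel half-plane `ℍ^N = {(z,u,v) : Im z > |u|² + |v|²}`. -/
def Siegel3 (p q : ℕ) : Set (E3 p q) :=
  {x | enormSq x.2.1 + enormSq x.2.2 < x.1.im}

/-! The flow `t ↦ (z + 2it⟨u,a⟩ + it²|a|² + tb, u + ta, diag(e^{itθ_j}) v)` is a one-parameter
group of holomorphic maps preserving `Im z - |u|² - |v|²`, hence of automorphisms of `ℍ^N`;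
choosing `θ_j = arg e_j`, its time-one map is `ψ`. The flow is jointly continuous in `(t, x)`,
which gives uniform convergence to the identity on compact sets as `t → 0`. -/

section Hermitian

variable {n : Type*} [Fintype n]

lemma herm_self_s11 (x : n → ℂ) : herm x x = (enormSq x : ℂ) := by
  simp only [herm, enormSq, Complex.mul_conj, Complex.normSq_eq_norm_sq]
  push_cast
  rfl

lemma herm_add_left (x y z : n → ℂ) : herm (x + y) z = herm x z + herm y z := by
  simp only [herm, Pi.add_apply, add_mul, Finset.sum_add_distrib]

lemma herm_smul_left (c : ℂ) (x z : n → ℂ) : herm (c • x) z = c * herm x z := by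
  simp only [herm, Pi.smul_apply, smul_eq_mul, mul_assoc, Finset.mul_sum]

lemma enormSq_add_real_smul (t : ℝ) (u a : n → ℂ) :
    enormSq (u + (t : ℂ) • a) = enormSq u + 2 * t * (herm u a).re + t ^ 2 * enormSq a := by
  simp only [enormSq, herm, Complex.re_sum, Finset.mul_sum, ← Finset.sum_add_distrib]
  refine Finset.sum_congr rfl fun j _ => ?_
  simp only [Pi.add_apply, Pi.smul_apply, smul_eq_mul, ← Complex.normSq_eq_norm_sq,
    Complex.normSq_add, Complex.normSq_ofReal, map_mul, Complex.conj_ofReal,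
    mul_left_comm (u j), Complex.re_ofReal_mul]
  ring

lemma differentiable_herm_left (a : n → ℂ) : Differentiable ℂ fun x : n → ℂ => herm x a :=
  Differentiable.fun_sum fun j _ => by fun_prop

end Hermitian

lemma Continuous.tendstoUniformlyOn_of_isCompact {α β γ : Type*} [UniformSpace α]
    [WeaklyLocallyCompactSpace α] [UniformSpace β] [UniformSpace γ] {F : α → β → γ}
    (hF : Continuous (Function.uncurry F)) (x : α) {K : Set β} (hK : IsCompact K) :
    TendstoUniformlyOn F (F x) (nhds x) K := by
  obtain ⟨L, hL, hxL⟩ := exists_compact_mem_nhds x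
  have h := ((hL.prod hK).uniformContinuousOn_of_continuous hF.continuousOn).tendstoUniformlyOn
    (mem_of_mem_nhds hxL)
  rwa [nhdsWithin_eq_nhds.mpr hxL] at h

lemma isHolSemigroupOn_of_continuous_flow {E : Type*} [NormedAddCommGroup E] [NormedSpace ℂ E]
    {U : Set E} {φ : ℝ → E → E} (hmaps : ∀ t, 0 ≤ t → MapsTo (φ t) U U)
    (hdiff : ∀ t, Differentiable ℂ (φ t)) (hzero : φ 0 = id)
    (hadd : ∀ s t, φ (s + t) = φ s ∘ φ t) (hcont : Continuous (Function.uncurry φ)) :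
    IsHolSemigroupOn U φ := by
  refine ⟨hmaps, fun t _ => (hdiff t).differentiableOn, fun z _ => by rw [hzero]; rfl,
    fun s _ t _ z _ => by rw [hadd]; rfl, fun K _ hK => ?_⟩
  have h := hcont.tendstoUniformlyOn_of_isCompact 0 hK
  rw [hzero] at h
  exact fun u hu => (h u hu).filter_mono nhdsWithin_le_nhds

def siegelDefect {p q : ℕ} (x : E3 p q) : ℝ :=
  x.1.im - (enormSq x.2.1 + enormSq x.2.2)

lemma mem_siegel3_iff {p q : ℕ} {x : E3 p q} : x ∈ Siegel3 p q ↔ 0 < siegelDefect x :=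
  (sub_pos (a := x.1.im)).symm

def parabolicFlow {p q : ℕ} (a : Fin p → ℂ) (b : ℝ) (θ : Fin q → ℝ) (t : ℝ) (x : E3 p q) :
    E3 p q :=
  (x.1 + 2 * I * t * herm x.2.1 a + I * t ^ 2 * enormSq a + t * b,
   x.2.1 + (t : ℂ) • a,
   fun j => exp ((t * θ j : ℝ) * I) * x.2.2 j)

section parabolicFlow

variable {p q : ℕ} (a : Fin p → ℂ) (b : ℝ) (θ : Fin q → ℝ)

lemma parabolicFlow_zero : parabolicFlow a b θ 0 = id := by
  funext x
  simp [parabolicFlow]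

lemma parabolicFlow_add (s t : ℝ) :
    parabolicFlow a b θ (s + t) = parabolicFlow a b θ s ∘ parabolicFlow a b θ t := by
  funext x
  refine Prod.ext ?_ (Prod.ext ?_ (funext fun j => ?_))
  · simp only [parabolicFlow, Function.comp_apply, herm_add_left, herm_smul_left, herm_self_s11]
    push_cast
    ring
  · simp only [parabolicFlow, Function.comp_apply, add_smul, add_comm (s : ℂ), Complex.ofReal_add,
      add_assoc]
  · simp only [parabolicFlow, Function.comp_apply, ← mul_assoc, ← Complex.exp_add]
    push_cast
    ring_nf

lemma differentiable_parabolicFlow (t : ℝ) : Differentiable ℂ (parabolicFlow a b θ t) := by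
  have hherm : Differentiable ℂ fun x : E3 p q => herm x.2.1 a :=
    (differentiable_herm_left a).comp (by fun_prop)
  refine .prodMk (by fun_prop) (.prodMk (by fun_prop) (differentiable_pi.mpr fun j => ?_))
  fun_prop

lemma continuous_uncurry_parabolicFlow : Continuous (Function.uncurry (parabolicFlow a b θ)) := by
  have hherm : Continuous fun y : ℝ × E3 p q => herm y.2.2.1 a :=
    (differentiable_herm_left a).continuous.comp (by fun_prop)
  refine .prodMk (by fun_prop) (.prodMk (by fun_prop) (continuous_pi fun j => ?_))
  fun_prop

lemma siegelDefect_parabolicFlow (t : ℝ) (x : E3 p q) :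
    siegelDefect (parabolicFlow a b θ t x) = siegelDefect x := by
  have hrot : enormSq (fun j => exp ((t * θ j : ℝ) * I) * x.2.2 j) = enormSq x.2.2 :=
    Finset.sum_congr rfl fun j _ => by rw [norm_mul, norm_exp_ofReal_mul_I, one_mul]
  simp only [siegelDefect, parabolicFlow, enormSq_add_real_smul, hrot]
  simp [Complex.mul_im, ← Complex.ofReal_pow]
  ring

lemma mapsTo_parabolicFlow (t : ℝ) :
    MapsTo (parabolicFlow a b θ t) (Siegel3 p q) (Siegel3 p q) := fun x hx => by
  rwa [mem_siegel3_iff, siegelDefect_parabolicFlow, ← mem_siegel3_iff]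

lemma parabolicFlow_one_arg {e : Fin q → ℂ} (he : ∀ j, ‖e j‖ = 1) (x : E3 p q) :
    parabolicFlow a b (fun j => arg (e j)) 1 x
      = (x.1 + 2 * I * herm x.2.1 a + I * enormSq a + b, x.2.1 + a, (diagonal e).mulVec x.2.2) := by
  refine Prod.ext (by simp [parabolicFlow])
    (Prod.ext (by simp [parabolicFlow]) (funext fun j => ?_))
  have hj := norm_mul_exp_arg_mul_I (e j)
  rw [he j, ofReal_one, one_mul] at hj
  simp [parabolicFlow, mulVec_diagonal, hj]

end parabolicFlow

theorem stmt11_general {p q : ℕ} (a : Fin p → ℂ) (b : ℝ)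
    (e : Fin q → ℂ) (he : ∀ j, ‖e j‖ = 1)
    (ψ : E3 p q → E3 p q)
    (hψ : ∀ x, ψ x = (x.1 + 2 * Complex.I * herm x.2.1 a
        + Complex.I * (enormSq a : ℂ) + (b : ℂ),
      x.2.1 + a, (Matrix.diagonal e).mulVec x.2.2)) :
    ∃ φt : ℝ → E3 p q → E3 p q,
      IsHolSemigroupOn (Siegel3 p q) φt ∧ ∀ z ∈ Siegel3 p q, φt 1 z = ψ z := by
  refine ⟨parabolicFlow a b fun j => arg (e j), ?_, fun x _ => by
    rw [hψ, parabolicFlow_one_arg a b he]⟩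
  exact isHolSemigroupOn_of_continuous_flow (fun t _ => mapsTo_parabolicFlow a b _ t)
    (differentiable_parabolicFlow a b _) (parabolicFlow_zero a b _) (parabolicFlow_add a b _)
    (continuous_uncurry_parabolicFlow a b _)

/-- The parabolic automorphism
`ψ(z,u,v) = (z + 2i⟨u,a⟩ + i|a|² + b, u + a, D v)` of `ℍ^N` (with `b` real and `D`
diagonal with unimodular diagonal entries different from `1`) can be embedded
into a semigroup of holomorphic self-maps of `ℍ^N`. -/
theorem stmt11 {p q : ℕ} (a : Fin p → ℂ) (b : ℝ)
    (e : Fin q → ℂ) (he : ∀ j, ‖e j‖ = 1) (he1 : ∀ j, e j ≠ 1)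
    (ψ : E3 p q → E3 p q)
    (hψ : ∀ x, ψ x = (x.1 + 2 * Complex.I * herm x.2.1 a
        + Complex.I * (enormSq a : ℂ) + (b : ℂ),
      x.2.1 + a, (Matrix.diagonal e).mulVec x.2.2)) :
    ∃ φt : ℝ → E3 p q → E3 p q,
      IsHolSemigroupOn (Siegel3 p q) φt ∧ ∀ z ∈ Siegel3 p q, φt 1 z = ψ z :=
  stmt11_general a b e he ψ hψ
end
end

section
/- For all real numbers λ > 0, u < 0, v ≥ 0 with λ + 2u < 0, and all t > 0, one has |e^{t(u+iv)} − 1|² / ((1 − e^{−λt})·(1 − e^{λt}e^{2ut})) ≤ −(u² + v²)/(λ(2u + λ)), and the left-hand side tends to −(u² + v²)/(λ(2u + λ)) as t → 0⁺. (Here |e^{t(u+iv)} − 1|² = (1 − e^{ut})² + 2e^{ut}(1 − cos(vt)), and both factors in the denominator are positive.) -/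
/-!
With `x = λt/2`, `y = -(λ + 2u)t/2` and `w = vt` (so that `ut = -(x + y)`), the quotient becomes
`((1 - e^{-(x+y)})² + 2e^{-(x+y)}(1 - cos w)) / ((1 - e^{-2x})(1 - e^{-2y}))` and the bound
`((x + y)² + w²) / (4xy)`, and the two summands of the numerator are bounded separately.
After factoring out `2e^{-(x+y)}`, the first bound says that `(cosh s - 1)/s²` at `s = x - y` is
at most its value at `s = x + y`; this holds because `(cosh s - 1)/s² = 2 (sinh (s/2) / s)²` and
`sinh s / s = ∫₀¹ cosh (sτ) dτ` increases with `|s|`. The second follows from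
`1 - cos w ≤ w²/2` and `2x e^{-x} ≤ 1 - e^{-2x}`.
Numerator and both denominator factors vanish at `0`, so the quotient tends to the quotient of
the derivatives, `|u + iv|² / (λ · (-(λ + 2u)))`.
-/

open Set Filter Topology

namespace Real

theorem sinh_div_self_eq_integral {p : ℝ} (hp : p ≠ 0) :
    sinh p / p = ∫ s in (0 : ℝ)..1, cosh (p * s) := by
  have hderiv (s : ℝ) (_ : s ∈ uIcc (0 : ℝ) 1) :
      HasDerivAt (fun s ↦ sinh (p * s) / p) (cosh (p * s)) s := by
    simpa [hp] using ((hasDerivAt_id s).const_mul p).sinh.div_const p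
  rw [intervalIntegral.integral_eq_sub_of_hasDerivAt hderiv
    (Continuous.intervalIntegrable (by fun_prop) _ _)]
  simp

theorem sinh_div_self_le {p q : ℝ} (hp : 0 < p) (hpq : p ≤ q) : sinh p / p ≤ sinh q / q := by
  rw [sinh_div_self_eq_integral hp.ne', sinh_div_self_eq_integral (hp.trans_le hpq).ne']
  refine intervalIntegral.integral_mono_on zero_le_one
    (Continuous.intervalIntegrable (by fun_prop) _ _)
    (Continuous.intervalIntegrable (by fun_prop) _ _) fun s hs ↦ ?_
  rw [cosh_le_cosh, abs_of_nonneg (by nlinarith [hs.1]), abs_of_nonneg (by nlinarith [hs.1])]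
  exact mul_le_mul_of_nonneg_right hpq hs.1

theorem cosh_sub_one_eq (x : ℝ) : cosh x - 1 = 2 * sinh (x / 2) ^ 2 := by
  conv_lhs => rw [← mul_div_cancel₀ x two_ne_zero, cosh_two_mul, cosh_sq]
  ring

theorem sq_mul_cosh_sub_one_le {p q : ℝ} (hpq : |p| ≤ |q|) :
    q ^ 2 * (cosh p - 1) ≤ p ^ 2 * (cosh q - 1) := by
  rw [← cosh_abs p, ← cosh_abs q, ← sq_abs p, ← sq_abs q, cosh_sub_one_eq, cosh_sub_one_eq]
  rcases (abs_nonneg p).eq_or_lt with hp | hp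
  · simp [← hp]
  have hq := hp.trans_le hpq
  have key : |q| * sinh (|p| / 2) ≤ |p| * sinh (|q| / 2) := by
    have := sinh_div_self_le (half_pos hp) (by linarith : |p| / 2 ≤ |q| / 2)
    rw [div_le_div_iff₀ (half_pos hp) (half_pos hq)] at this
    linarith
  have hnonneg : 0 ≤ |q| * sinh (|p| / 2) :=
    mul_nonneg hq.le (sinh_nonneg_iff.2 (by positivity))
  nlinarith [mul_le_mul key key hnonneg (hnonneg.trans key)]

theorem two_mul_mul_exp_neg_le_s14 {x : ℝ} (hx : 0 ≤ x) : 2 * x * exp (-x) ≤ 1 - exp (-(2 * x)) := by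
  have h : 1 - exp (-(2 * x)) = 2 * exp (-x) * sinh x := by
    rw [sinh_eq]
    simp only [exp_neg, two_mul, exp_add]
    field_simp
    ring
  rw [h]
  nlinarith [self_le_sinh_iff.2 hx, exp_pos (-x)]

theorem four_mul_mul_one_sub_exp_neg_sq_le {x y : ℝ} (hx : 0 ≤ x) (hy : 0 ≤ y) :
    4 * x * y * (1 - exp (-(x + y))) ^ 2 ≤
      (x + y) ^ 2 * ((1 - exp (-(2 * x))) * (1 - exp (-(2 * y)))) := by
  have hsq : (1 - exp (-(x + y))) ^ 2 = 2 * exp (-(x + y)) * (cosh (x + y) - 1) := by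
    rw [cosh_eq]
    simp only [exp_neg, exp_add]
    field_simp
    ring
  have hprod : (1 - exp (-(2 * x))) * (1 - exp (-(2 * y))) =
      2 * exp (-(x + y)) * (cosh (x + y) - cosh (x - y)) := by
    rw [cosh_eq, cosh_eq]
    simp only [exp_neg, exp_add, exp_sub, two_mul]
    field_simp
    ring
  have hcosh := sq_mul_cosh_sub_one_le (p := x - y) (q := x + y)
    (by rw [abs_of_nonneg (add_nonneg hx hy)]; exact abs_le.2 ⟨by linarith, by linarith⟩)
  rw [hsq, hprod]
  nlinarith [exp_pos (-(x + y))]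

theorem one_sub_exp_cos_div_le {x y : ℝ} (hx : 0 < x) (hy : 0 < y) (w : ℝ) :
    ((1 - exp (-(x + y))) ^ 2 + 2 * exp (-(x + y)) * (1 - cos w)) /
        ((1 - exp (-(2 * x))) * (1 - exp (-(2 * y)))) ≤
      ((x + y) ^ 2 + w ^ 2) / (4 * x * y) := by
  have hA : 0 < 1 - exp (-(2 * x)) := sub_pos.2 (exp_lt_one_iff.2 (by linarith))
  have hB : 0 < 1 - exp (-(2 * y)) := sub_pos.2 (exp_lt_one_iff.2 (by linarith))
  rw [div_le_div_iff₀ (mul_pos hA hB) (by positivity)]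
  have hexp := mul_le_mul (two_mul_mul_exp_neg_le_s14 hx.le) (two_mul_mul_exp_neg_le_s14 hy.le)
    (by positivity) hA.le
  have hcos : 2 * (1 - cos w) ≤ w ^ 2 := by linarith [one_sub_sq_div_two_le_cos (x := w)]
  have hcos_term := mul_le_mul hexp hcos (by linarith [cos_le_one w]) (by positivity)
  have hexp_term := four_mul_mul_one_sub_exp_neg_sq_le hx.le hy.le
  rw [neg_add, exp_add] at hexp_term ⊢
  linear_combination hexp_term + hcos_term

theorem hasDerivAt_one_sub_exp_mul (c : ℝ) :
    HasDerivAt (fun t ↦ 1 - exp (c * t)) (-c) 0 := by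
  simpa using ((hasDerivAt_id (0 : ℝ)).const_mul c).exp.const_sub 1

end Real

theorem Complex.norm_exp_sub_one_sq (z : ℂ) :
    ‖exp z - 1‖ ^ 2 = (1 - Real.exp z.re) ^ 2 + 2 * Real.exp z.re * (1 - Real.cos z.im) := by
  rw [← normSq_eq_norm_sq, normSq_apply, sub_re, sub_im, exp_re, exp_im, one_re, one_im]
  linear_combination Real.exp z.re ^ 2 * Real.sin_sq_add_cos_sq z.im

theorem tendsto_norm_sq_div_mul_nhdsNE {E : Type*} [NormedAddCommGroup E] [NormedSpace ℝ E]
    {f : ℝ → E} {g h : ℝ → ℝ} {f' : E} {g' h' : ℝ} (hf : HasDerivAt f f' 0)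
    (hg : HasDerivAt g g' 0) (hh : HasDerivAt h h' 0) (hf₀ : f 0 = 0) (hg₀ : g 0 = 0)
    (hh₀ : h 0 = 0) (hgh : g' * h' ≠ 0) :
    Tendsto (fun t ↦ ‖f t‖ ^ 2 / (g t * h t)) (𝓝[≠] 0) (𝓝 (‖f'‖ ^ 2 / (g' * h'))) := by
  have hslope := (hf.tendsto_slope_zero.norm.pow 2).div
    (hg.tendsto_slope_zero.mul hh.tendsto_slope_zero) hgh
  refine hslope.congr' (eventually_nhdsWithin_of_forall fun t (ht : t ≠ 0) ↦ ?_)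
  simp only [Pi.div_apply, zero_add, hf₀, hg₀, hh₀, sub_zero, norm_smul, smul_eq_mul, norm_inv,
    Real.norm_eq_abs, mul_pow, inv_pow, sq_abs]
  field_simp

theorem stmt14_general (lam u v : ℝ) (hlam : 0 < lam)
    (hsum : lam + 2 * u < 0) :
    (∀ t : ℝ, 0 < t →
      ‖Complex.exp ((t : ℂ) * ((u : ℂ) + (v : ℂ) * Complex.I)) - 1‖ ^ 2 /
          ((1 - Real.exp (-lam * t)) * (1 - Real.exp (lam * t) * Real.exp (2 * u * t)))
        ≤ -((u ^ 2 + v ^ 2) / (lam * (2 * u + lam)))) ∧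
    Tendsto (fun t : ℝ =>
      ‖Complex.exp ((t : ℂ) * ((u : ℂ) + (v : ℂ) * Complex.I)) - 1‖ ^ 2 /
        ((1 - Real.exp (-lam * t)) * (1 - Real.exp (lam * t) * Real.exp (2 * u * t))))
      (nhdsWithin 0 (Ioi 0)) (nhds (-((u ^ 2 + v ^ 2) / (lam * (2 * u + lam))))) := by
  have hsum' : 2 * u + lam ≠ 0 := by linarith
  simp_rw [← Real.exp_add, ← add_mul]
  constructor
  · intro t ht
    have hx : 0 < lam * t / 2 := by positivity
    have hy : 0 < -(lam + 2 * u) * t / 2 := div_pos (mul_pos (by linarith) ht) two_pos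
    convert Real.one_sub_exp_cos_div_le hx hy (v * t) using 1
    · simp only [Complex.norm_exp_sub_one_sq, Complex.re_ofReal_mul, Complex.im_ofReal_mul,
        Complex.add_re, Complex.add_im, Complex.ofReal_re, Complex.ofReal_im, Complex.mul_I_re,
        Complex.mul_I_im]
      ring_nf
    · field_simp
      ring
  · have hf : HasDerivAt (fun t : ℝ ↦ Complex.exp (t * (u + v * Complex.I)) - 1)
        (u + v * Complex.I) 0 := by
      simpa using
        ((hasDerivAt_id (0 : ℝ)).ofReal_comp.mul_const (u + v * Complex.I)).cexp.sub_const 1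
    convert (tendsto_norm_sq_div_mul_nhdsNE hf (Real.hasDerivAt_one_sub_exp_mul (-lam))
      (Real.hasDerivAt_one_sub_exp_mul (lam + 2 * u)) (by simp) (by simp) (by simp)
      (mul_ne_zero (by simp [hlam.ne']) (by linarith))).mono_left (nhdsGT_le_nhdsNE 0) using 2
    rw [Complex.sq_norm, Complex.normSq_add_mul_I]
    field_simp
    ring

/-- For `λ > 0`, `u < 0`, `v ≥ 0` with `λ + 2u < 0`, the function
`h(t) = |e^{t(u+iv)} - 1|² / ((1 - e^{-λt})(1 - e^{λt} e^{2ut}))` satisfies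
`h(t) ≤ -(u² + v²)/(λ(2u + λ))` for all `t > 0`, and
`h(t) → -(u² + v²)/(λ(2u + λ))` as `t → 0⁺`. -/
theorem stmt14 (lam u v : ℝ) (hlam : 0 < lam) (hu : u < 0) (hv : 0 ≤ v)
    (hsum : lam + 2 * u < 0) :
    (∀ t : ℝ, 0 < t →
      ‖Complex.exp ((t : ℂ) * ((u : ℂ) + (v : ℂ) * Complex.I)) - 1‖ ^ 2 /
          ((1 - Real.exp (-lam * t)) * (1 - Real.exp (lam * t) * Real.exp (2 * u * t)))
        ≤ -((u ^ 2 + v ^ 2) / (lam * (2 * u + lam)))) ∧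
    Tendsto (fun t : ℝ =>
      ‖Complex.exp ((t : ℂ) * ((u : ℂ) + (v : ℂ) * Complex.I)) - 1‖ ^ 2 /
        ((1 - Real.exp (-lam * t)) * (1 - Real.exp (lam * t) * Real.exp (2 * u * t))))
      (nhdsWithin 0 (Ioi 0)) (nhds (-((u ^ 2 + v ^ 2) / (lam * (2 * u + lam))))) :=
  stmt14_general lam u v hlam hsum
end

section
/- Define g : (−∞, 0) → ℝ by g(x) = x e^x/(1 − e^x). Then g is concave on (−∞, 0); in particular, for all real x, y < 0 one has g((x + y)/2) ≥ (g(x) + g(y))/2. -/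
open Set Real

/-! The second derivative of `g x = x eˣ / (1 - eˣ)` is `eˣ φ(x) / (1 - eˣ)³` with
`φ(x) = x (1 + eˣ) + 2 - 2 eˣ`. Since `φ' (x) = 1 - eˣ (1 - x) ≥ 0` by `1 - x ≤ e⁻ˣ`, `φ` is monotone
with `φ(0) = 0`, so `g'' ≤ 0` on `(-∞, 0)`. -/

lemma ConcaveOn.add_div_two_le {s : Set ℝ} {f : ℝ → ℝ} (hf : ConcaveOn ℝ s f) {x y : ℝ}
    (hx : x ∈ s) (hy : y ∈ s) : (f x + f y) / 2 ≤ f ((x + y) / 2) :=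
  calc (f x + f y) / 2 = (1 / 2 : ℝ) • f x + (1 / 2 : ℝ) • f y := by simp only [smul_eq_mul]; ring
    _ ≤ f ((1 / 2 : ℝ) • x + (1 / 2 : ℝ) • y) := hf.2 hx hy (by norm_num) (by norm_num) (by norm_num)
    _ = f ((x + y) / 2) := by simp only [smul_eq_mul]; ring_nf

lemma monotone_mul_one_add_exp_add_two_sub_two_mul_exp :
    Monotone fun x : ℝ => x * (1 + exp x) + 2 - 2 * exp x := by
  refine monotone_of_hasDerivAt_nonneg (f' := fun x => 1 - exp x * (1 - x)) (fun x => ?_) fun x => ?_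
  · have h := (((hasDerivAt_id' x).fun_mul ((hasDerivAt_exp x).const_add 1)).add_const 2).fun_sub
      ((hasDerivAt_exp x).const_mul 2)
    exact h.congr_deriv (by ring)
  · have h : exp x * (1 - x) ≤ exp x * exp (-x) :=
      mul_le_mul_of_nonneg_left (by linarith [add_one_le_exp (-x)]) (exp_pos x).le
    rw [← exp_add, add_neg_cancel, exp_zero] at h
    exact sub_nonneg.2 h

lemma mul_one_add_exp_add_two_le_two_mul_exp {x : ℝ} (hx : x ≤ 0) :
    x * (1 + exp x) + 2 ≤ 2 * exp x := by
  have h := monotone_mul_one_add_exp_add_two_sub_two_mul_exp hx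
  simp only [exp_zero] at h
  linarith

lemma one_sub_exp_ne_zero {x : ℝ} (hx : x ≠ 0) : 1 - exp x ≠ 0 :=
  sub_ne_zero.2 (Ne.symm (mt (exp_eq_one_iff x).1 hx))

lemma hasDerivAt_mul_exp_div_one_sub_exp {x : ℝ} (hx : x ≠ 0) :
    HasDerivAt (fun x => x * exp x / (1 - exp x))
      (exp x * (1 - exp x + x) / (1 - exp x) ^ 2) x := by
  have h := ((hasDerivAt_id' x).fun_mul (hasDerivAt_exp x)).fun_div
    ((hasDerivAt_exp x).const_sub 1) (one_sub_exp_ne_zero hx)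
  exact h.congr_deriv (by field_simp; ring)

lemma hasDerivAt_exp_mul_one_sub_exp_add_div_one_sub_exp_sq {x : ℝ} (hx : x ≠ 0) :
    HasDerivAt (fun x => exp x * (1 - exp x + x) / (1 - exp x) ^ 2)
      (exp x * (x * (1 + exp x) + 2 - 2 * exp x) / (1 - exp x) ^ 3) x := by
  have hne := one_sub_exp_ne_zero hx
  have h := ((hasDerivAt_exp x).fun_mul
    (((hasDerivAt_exp x).const_sub 1).fun_add (hasDerivAt_id' x))).fun_div
    (((hasDerivAt_exp x).const_sub 1).fun_pow 2) (pow_ne_zero 2 hne)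
  exact h.congr_deriv (by field_simp; ring)

lemma concaveOn_mul_exp_div_one_sub_exp :
    ConcaveOn ℝ (Iio 0) fun x => x * exp x / (1 - exp x) := by
  refine concaveOn_of_hasDerivWithinAt2_nonpos (convex_Iio 0)
    (f' := fun x => exp x * (1 - exp x + x) / (1 - exp x) ^ 2)
    (f'' := fun x => exp x * (x * (1 + exp x) + 2 - 2 * exp x) / (1 - exp x) ^ 3)
    (fun x hx => (hasDerivAt_mul_exp_div_one_sub_exp (ne_of_lt hx)).continuousAt.continuousWithinAt)
    (fun x hx => ?_) (fun x hx => ?_) fun x hx => ?_ <;> rw [interior_Iio] at hx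
  · exact (hasDerivAt_mul_exp_div_one_sub_exp (ne_of_lt hx)).hasDerivWithinAt
  · exact (hasDerivAt_exp_mul_one_sub_exp_add_div_one_sub_exp_sq (ne_of_lt hx)).hasDerivWithinAt
  · have hφ : x * (1 + exp x) + 2 - 2 * exp x ≤ 0 := by
      linarith [mul_one_add_exp_add_two_le_two_mul_exp hx.le]
    have hden : 0 < (1 - exp x) ^ 3 := pow_pos (sub_pos.2 (exp_lt_one_iff.2 hx)) 3
    exact div_nonpos_of_nonpos_of_nonneg (mul_nonpos_of_nonneg_of_nonpos (exp_pos x).le hφ) hden.le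

/-- The function `g(x) = x e^x / (1 - e^x)` is concave on `(-∞, 0)`; in
particular it is midpoint-concave there. -/
theorem stmt19 :
    ConcaveOn ℝ (Iio (0 : ℝ)) (fun x => x * Real.exp x / (1 - Real.exp x)) ∧
    ∀ x y : ℝ, x < 0 → y < 0 →
      ((x + y) / 2) * Real.exp ((x + y) / 2) / (1 - Real.exp ((x + y) / 2)) ≥
        (x * Real.exp x / (1 - Real.exp x) + y * Real.exp y / (1 - Real.exp y)) / 2 :=
  ⟨concaveOn_mul_exp_div_one_sub_exp, fun _ _ hx hy =>
    concaveOn_mul_exp_div_one_sub_exp.add_div_two_le hx hy⟩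
end
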